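/- arXiv:2208.11655 — 4 statements merged into one kernel-verified Lean document; each statement's English description precedes it below -/
import Mathlib

section
/- Let f be a mixed polynomial depending on the variable u, P a positive weight vector, and f_P the P-relative face function (the sum of monomials of f whose radial degree equals d(P;f)). Then the following are equivalent: (i) d(P; f_u) = d(P; f) − p₁; (ii) (f_u)_P = (f_P)_u; (iii) f_P depends on the variable u. -/
open Complex

noncomputable section

/-- The index of a mixed monomial: `((ν₁,ν₂),(μ₁,μ₂))`. -/
abbrev MixedIdx : Type := (ℕ × ℕ) × (ℕ × ℕ)

/-- The coefficients `c_{ν,μ}` of a mixed polynomial `f(z,z̄) = Σ c_{ν,μ} z^ν z̄^μ`. -/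
abbrev MixedCoeff : Type := MixedIdx → ℂ

/-- The exponent `ν + μ` of a mixed monomial index. -/
def expo (p : MixedIdx) : ℕ × ℕ := (p.1.1 + p.2.1, p.1.2 + p.2.2)

/-- The linear form `ℓ_P` associated to a weight vector `P`; `ℓ_P ∘ expo` is the
radial degree `rdeg_P`. -/
def ellP (P : ℕ × ℕ) (w : ℕ × ℕ) : ℕ := P.1 * w.1 + P.2 * w.2

/-- The mixed monomial `u^ν₁ v^ν₂ ū^μ₁ v̄^μ₂`. -/
def mono (p : MixedIdx) (u v : ℂ) : ℂ :=
  u ^ p.1.1 * v ^ p.1.2 * (starRingEnd ℂ u) ^ p.2.1 * (starRingEnd ℂ v) ^ p.2.2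

/-- Evaluation of the mixed polynomial with coefficients `c` at `(u,v) ∈ ℂ²`. -/
def eval (c : MixedCoeff) (u v : ℂ) : ℂ := ∑ᶠ p, c p * mono p u v

/-- `c` has finitely many nonzero coefficients (so it really is a polynomial). -/
def FiniteSupp (c : MixedCoeff) : Prop := (Function.support c).Finite

/-- Wirtinger derivative `∂/∂u` at the level of coefficients. -/
def Du (c : MixedCoeff) : MixedCoeff := fun p => (p.1.1 + 1 : ℂ) * c ((p.1.1 + 1, p.1.2), p.2)

/-- Wirtinger derivative `∂/∂ū` at the level of coefficients. -/
def Dub (c : MixedCoeff) : MixedCoeff := fun p => (p.2.1 + 1 : ℂ) * c (p.1, (p.2.1 + 1, p.2.2))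

/-- Wirtinger derivative `∂/∂v` at the level of coefficients. -/
def Dv (c : MixedCoeff) : MixedCoeff := fun p => (p.1.2 + 1 : ℂ) * c ((p.1.1, p.1.2 + 1), p.2)

/-- Wirtinger derivative `∂/∂v̄` at the level of coefficients. -/
def Dvb (c : MixedCoeff) : MixedCoeff := fun p => (p.2.2 + 1 : ℂ) * c (p.1, (p.2.1, p.2.2 + 1))

/-- `(u,v)` is a critical point of the mixed polynomial `c` (the real Jacobian of the
associated map `ℝ⁴ → ℝ²` has rank `≤ 1`), expressed through Oka's equations
`s₁ = s₂ = s₃ = 0`. -/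
def Crit (c : MixedCoeff) (u v : ℂ) : Prop :=
  eval (Du c) u v * starRingEnd ℂ (eval (Dvb c) u v)
      - starRingEnd ℂ (eval (Dub c) u v) * eval (Dv c) u v = 0 ∧
  ‖eval (Du c) u v‖ = ‖eval (Dub c) u v‖ ∧
  ‖eval (Dv c) u v‖ = ‖eval (Dvb c) u v‖

/-- `d(P; c)`: the minimal radial degree of a monomial of `c` w.r.t. the weight `P`. -/
def dmin (P : ℕ × ℕ) (c : MixedCoeff) : ℕ :=
  sInf {n : ℕ | ∃ p, c p ≠ 0 ∧ ellP P (expo p) = n}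

/-- The `P`-relative face function: the monomials of minimal radial degree. -/
def face (P : ℕ × ℕ) (c : MixedCoeff) : MixedCoeff :=
  fun p => if ellP P (expo p) = dmin P c then c p else 0

/-- The face function of the vertex `w`: all monomials with exponent `w`. -/
def vertexFace (w : ℕ × ℕ) (c : MixedCoeff) : MixedCoeff :=
  fun p => if expo p = w then c p else 0

/-- `P` is the (primitive, positive) weight vector of a compact 1-face of the Newton
boundary of `c`: at least two distinct exponents realize the minimal radial degree. -/
def IsFaceWeight (c : MixedCoeff) (P : ℕ × ℕ) : Prop :=
  0 < P.1 ∧ 0 < P.2 ∧ Nat.gcd P.1 P.2 = 1 ∧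
  ∃ p q, c p ≠ 0 ∧ c q ≠ 0 ∧ expo p ≠ expo q ∧
    ellP P (expo p) = dmin P c ∧ ellP P (expo q) = dmin P c

/-- `P` is the weight vector of the steepest compact 1-face (the face `Δ(P₁)`). -/
def IsSteepest (c : MixedCoeff) (P : ℕ × ℕ) : Prop :=
  IsFaceWeight c P ∧ ∀ Q, IsFaceWeight c Q → Q.1 * P.2 ≤ P.1 * Q.2

/-- `P` is the weight vector of the least steep compact 1-face (the face `Δ(P_N)`). -/
def IsLeastSteep (c : MixedCoeff) (P : ℕ × ℕ) : Prop :=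
  IsFaceWeight c P ∧ ∀ Q, IsFaceWeight c Q → P.1 * Q.2 ≤ Q.1 * P.2

/-- `w` is a non-extreme vertex of the Newton boundary: a vertex (an exponent of `c`
lying on the boundary) bounding two different compact 1-faces. -/
def NonExtremeVertex (c : MixedCoeff) (w : ℕ × ℕ) : Prop :=
  (∃ p, c p ≠ 0 ∧ expo p = w) ∧
  ∃ P Q, IsFaceWeight c P ∧ IsFaceWeight c Q ∧ P.1 * Q.2 ≠ Q.1 * P.2 ∧
    ellP P w = dmin P c ∧ ellP Q w = dmin Q c

/-- `c` has an inner Newton non-degenerate boundary. -/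
def InnerNonDeg (c : MixedCoeff) : Prop :=
  (∀ P, IsSteepest c P → ∀ u v : ℂ, v ≠ 0 →
      eval (face P c) u v = 0 → ¬ Crit (face P c) u v) ∧
  (∀ P, IsLeastSteep c P → ∀ u v : ℂ, u ≠ 0 →
      eval (face P c) u v = 0 → ¬ Crit (face P c) u v) ∧
  (∀ P, IsFaceWeight c P → ∀ u v : ℂ, u ≠ 0 → v ≠ 0 →
      eval (face P c) u v = 0 → ¬ Crit (face P c) u v) ∧
  (∀ w, NonExtremeVertex c w → ∀ u v : ℂ, u ≠ 0 → v ≠ 0 →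
      eval (vertexFace w c) u v = 0 → ¬ Crit (vertexFace w c) u v)

/-- `c` has a strongly inner Newton non-degenerate boundary. -/
def StronglyInnerNonDeg (c : MixedCoeff) : Prop :=
  (∀ P, IsSteepest c P → ∀ u v : ℂ, v ≠ 0 → ¬ Crit (face P c) u v) ∧
  (∀ P, IsLeastSteep c P → ∀ u v : ℂ, u ≠ 0 → ¬ Crit (face P c) u v) ∧
  (∀ P, IsFaceWeight c P → ∀ u v : ℂ, u ≠ 0 → v ≠ 0 → ¬ Crit (face P c) u v) ∧
  (∀ w, NonExtremeVertex c w → ∀ u v : ℂ, u ≠ 0 → v ≠ 0 → ¬ Crit (vertexFace w c) u v)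

/-- Oka's Newton non-degeneracy: for every compact face (equivalently, for every
positive weight vector `Q`) the face function has no critical points on its zero set
in `(ℂ*)²`. -/
def NewtonNonDeg (c : MixedCoeff) : Prop :=
  ∀ Q : ℕ × ℕ, 0 < Q.1 → 0 < Q.2 → ∀ u v : ℂ, u ≠ 0 → v ≠ 0 →
    eval (face Q c) u v = 0 → ¬ Crit (face Q c) u v

/-- Oka's strong Newton non-degeneracy: every face function has no critical points
in `(ℂ*)²`. -/
def StronglyNewtonNonDeg (c : MixedCoeff) : Prop :=
  ∀ Q : ℕ × ℕ, 0 < Q.1 → 0 < Q.2 → ∀ u v : ℂ, u ≠ 0 → v ≠ 0 →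
    ¬ Crit (face Q c) u v

/-- The Newton boundary meets the horizontal axis. -/
def UConvenient (c : MixedCoeff) : Prop := ∃ p, c p ≠ 0 ∧ (expo p).2 = 0

/-- The Newton boundary meets the vertical axis. -/
def VConvenient (c : MixedCoeff) : Prop := ∃ p, c p ≠ 0 ∧ (expo p).1 = 0

/-- The monomial index `p` lies on the Newton boundary of `c`. -/
def OnBoundary (c : MixedCoeff) (p : MixedIdx) : Prop :=
  ∃ Q : ℕ × ℕ, 0 < Q.1 ∧ 0 < Q.2 ∧ ellP Q (expo p) = dmin Q c

/-! Shifting the `u`-exponent by one raises the radial degree by `p₁`; hence `∂/∂u` lowers the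
minimal degree by at most `p₁`, with equality exactly when the face of `f` still contains a
monomial divisible by `u`, and `∂/∂u` then commutes with taking the face. -/

lemma ellP_expo_succ_fst (P : ℕ × ℕ) (q : MixedIdx) :
    ellP P (expo ((q.1.1 + 1, q.1.2), q.2)) = ellP P (expo q) + P.1 := by
  simp only [ellP, expo]
  ring

lemma Du_apply_ne_zero_iff {c : MixedCoeff} {q : MixedIdx} :
    Du c q ≠ 0 ↔ c ((q.1.1 + 1, q.1.2), q.2) ≠ 0 := by
  simp only [Du, ne_eq, mul_eq_zero, not_or]
  exact and_iff_right (by exact_mod_cast Nat.succ_ne_zero q.1.1)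

lemma Du_ne_zero_iff {c : MixedCoeff} : Du c ≠ 0 ↔ ∃ p, c p ≠ 0 ∧ 0 < p.1.1 := by
  simp only [Function.ne_iff, Pi.zero_apply, Du_apply_ne_zero_iff]
  constructor
  · rintro ⟨q, hq⟩
    exact ⟨_, hq, Nat.succ_pos _⟩
  · rintro ⟨⟨⟨_ | a, b⟩, m⟩, hp, hpos⟩
    · exact absurd hpos (lt_irrefl 0)
    · exact ⟨((a, b), m), hp⟩

lemma dmin_le (P : ℕ × ℕ) {c : MixedCoeff} {p : MixedIdx} (hp : c p ≠ 0) :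
    dmin P c ≤ ellP P (expo p) :=
  Nat.sInf_le ⟨p, hp, rfl⟩

lemma exists_ellP_eq_dmin (P : ℕ × ℕ) {c : MixedCoeff} (hc : c ≠ 0) :
    ∃ p, c p ≠ 0 ∧ ellP P (expo p) = dmin P c := by
  obtain ⟨p, hp⟩ := Function.ne_iff.1 hc
  exact Nat.sInf_mem (s := {n | ∃ p, c p ≠ 0 ∧ ellP P (expo p) = n}) ⟨_, p, hp, rfl⟩

lemma face_ne_zero (P : ℕ × ℕ) {c : MixedCoeff} (hc : c ≠ 0) : face P c ≠ 0 := by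
  obtain ⟨p, hp, hdeg⟩ := exists_ellP_eq_dmin P hc
  exact Function.ne_iff.2 ⟨p, by simpa [face, hdeg] using hp⟩

lemma dmin_le_dmin_Du_add (P : ℕ × ℕ) {c : MixedCoeff} (hc : Du c ≠ 0) :
    dmin P c ≤ dmin P (Du c) + P.1 := by
  obtain ⟨q, hq, hdeg⟩ := exists_ellP_eq_dmin P hc
  rw [← hdeg, ← ellP_expo_succ_fst]
  exact dmin_le P (Du_apply_ne_zero_iff.1 hq)

lemma Du_face_apply (P : ℕ × ℕ) (c : MixedCoeff) (q : MixedIdx) :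
    Du (face P c) q = if ellP P (expo q) + P.1 = dmin P c then Du c q else 0 := by
  simp only [Du, face, ellP_expo_succ_fst]
  split_ifs <;> simp

theorem dmin_face_deriv_tfae_general
    (P : ℕ × ℕ)
    (c : MixedCoeff)
    (hdep : ∃ p, c p ≠ 0 ∧ 0 < p.1.1) :
    List.TFAE [
      (dmin P (Du c) : ℤ) = (dmin P c : ℤ) - P.1,
      face P (Du c) = Du (face P c),
      ∃ p, face P c p ≠ 0 ∧ 0 < p.1.1 ] := by
  have hDu : Du c ≠ 0 := Du_ne_zero_iff.2 hdep
  have hle := dmin_le_dmin_Du_add P hDu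
  tfae_have 1 → 2
  | hdeg => funext fun q => by
    rw [face, Du_face_apply]
    exact if_congr (by omega) rfl rfl
  tfae_have 2 → 3
  | hcomm => Du_ne_zero_iff.1 (hcomm ▸ face_ne_zero P hDu)
  tfae_have 3 → 1
  | hface => by
    obtain ⟨q, hq⟩ := Function.ne_iff.1 (Du_ne_zero_iff.2 hface)
    rw [Du_face_apply] at hq
    split_ifs at hq with hdeg
    · have := dmin_le P hq
      omega
    · exact absurd rfl hq
  tfae_finish

/-- for a mixed polynomial depending on `u`, the following are
equivalent: (i) `d(P;f_u) = d(P;f) − p₁`; (ii) `(f_u)_P = (f_P)_u`;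
(iii) the face function `f_P` depends on `u`. -/
theorem dmin_face_deriv_tfae
    (P : ℕ × ℕ) (hP1 : 0 < P.1) (hP2 : 0 < P.2)
    (c : MixedCoeff) (hfin : FiniteSupp c)
    (hdep : ∃ p, c p ≠ 0 ∧ 0 < p.1.1) :
    List.TFAE [
      (dmin P (Du c) : ℤ) = (dmin P c : ℤ) - P.1,
      face P (Du c) = Du (face P c),
      ∃ p, face P c p ≠ 0 ∧ 0 < p.1.1 ] :=
  dmin_face_deriv_tfae_general P c hdep
end
end

section
/- Let f : C² → C be a mixed polynomial whose Newton principal part is u-semiholomorphic and whose Newton boundary is inner non-degenerate. Then for every non-extreme vertex Δ of the Newton boundary, the face function f_Δ has no zeros in (C*)². -/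
open Complex

noncomputable section

/-! ### Auxiliary lemmas for Statement 6 -/

/-- Shift of the `u`-exponent by one. -/
def shiftU : MixedIdx → MixedIdx := fun p => ((p.1.1 + 1, p.1.2), p.2)

/-- Shift of the `v`-exponent by one. -/
def shiftV : MixedIdx → MixedIdx := fun p => ((p.1.1, p.1.2 + 1), p.2)

/-- Shift of the `v̄`-exponent by one. -/
def shiftVb : MixedIdx → MixedIdx := fun p => (p.1, (p.2.1, p.2.2 + 1))

lemma shiftU_inj : Function.Injective shiftU := by
  intro ⟨⟨a1, a2⟩, a3, a4⟩ ⟨⟨b1, b2⟩, b3, b4⟩ h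
  simp only [shiftU, Prod.mk.injEq] at h
  simp only [Prod.mk.injEq]
  omega

lemma shiftV_inj : Function.Injective shiftV := by
  intro ⟨⟨a1, a2⟩, a3, a4⟩ ⟨⟨b1, b2⟩, b3, b4⟩ h
  simp only [shiftV, Prod.mk.injEq] at h
  simp only [Prod.mk.injEq]
  omega

lemma shiftVb_inj : Function.Injective shiftVb := by
  intro ⟨⟨a1, a2⟩, a3, a4⟩ ⟨⟨b1, b2⟩, b3, b4⟩ h
  simp only [shiftVb, Prod.mk.injEq] at h
  simp only [Prod.mk.injEq]
  omega

lemma finsum_shift (σ : MixedIdx → MixedIdx) (hσ : Function.Injective σ)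
    (g : MixedIdx → ℂ) (hg : ∀ q, q ∉ Set.range σ → g q = 0) :
    ∑ᶠ p, g (σ p) = ∑ᶠ q, g q := by
  rw [← finsum_mem_range hσ, ← finsum_mem_univ g]
  refine finsum_mem_inter_support_eq' g _ _ fun x hx => ?_
  simp only [Set.mem_univ, iff_true]
  by_contra h
  exact hx (hg x h)

lemma support_mul_sub (c' : MixedCoeff) (hfin : (Function.support c').Finite)
    (a : MixedIdx → ℂ) (u v : ℂ) :
    (Function.support fun p => a p * c' p * mono p u v).Finite := by
  apply hfin.subset
  intro p hp
  simp only [Function.mem_support] at hp ⊢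
  intro h
  exact hp (by simp [h])

lemma euler_u (f : MixedCoeff) (hfin : (Function.support f).Finite) (u v : ℂ) :
    eval (Du f) u v * u = ∑ᶠ p, (p.1.1 : ℂ) * f p * mono p u v := by
  have hsupp : (Function.support fun p => Du f p * mono p u v).Finite := by
    apply ((hfin.preimage shiftU_inj.injOn).subset)
    intro p hp
    simp only [Function.mem_support, Du] at hp
    have : f (shiftU p) ≠ 0 := by
      intro h
      exact hp (by simp [shiftU] at h ⊢; simp [h])
    exact this
  calc eval (Du f) u v * u = (∑ᶠ p, Du f p * mono p u v) * u := rfl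
    _ = ∑ᶠ p, Du f p * mono p u v * u := finsum_mul _ u
    _ = ∑ᶠ p, ((shiftU p).1.1 : ℂ) * f (shiftU p) * mono (shiftU p) u v := by
        refine finsum_congr fun p => ?_
        simp only [Du, shiftU, mono]
        push_cast
        ring
    _ = ∑ᶠ q, (q.1.1 : ℂ) * f q * mono q u v := by
        refine finsum_shift _ shiftU_inj (fun q => (q.1.1 : ℂ) * f q * mono q u v) fun q hq => ?_
        obtain ⟨⟨q1, q2⟩, q3, q4⟩ := q
        have : q1 = 0 := by
          by_contra h
          exact hq ⟨((q1 - 1, q2), q3, q4), by simp only [shiftU]; congr 2 <;> omega⟩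
        simp [this]

lemma euler_v (f : MixedCoeff) (hfin : (Function.support f).Finite) (u v : ℂ) :
    eval (Dv f) u v * v = ∑ᶠ p, (p.1.2 : ℂ) * f p * mono p u v := by
  have hsupp : (Function.support fun p => Dv f p * mono p u v).Finite := by
    apply ((hfin.preimage shiftV_inj.injOn).subset)
    intro p hp
    simp only [Function.mem_support, Dv] at hp
    have : f (shiftV p) ≠ 0 := by
      intro h
      exact hp (by simp [shiftV] at h ⊢; simp [h])
    exact this
  calc eval (Dv f) u v * v = (∑ᶠ p, Dv f p * mono p u v) * v := rfl
    _ = ∑ᶠ p, Dv f p * mono p u v * v := finsum_mul _ v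
    _ = ∑ᶠ p, ((shiftV p).1.2 : ℂ) * f (shiftV p) * mono (shiftV p) u v := by
        refine finsum_congr fun p => ?_
        simp only [Dv, shiftV, mono]
        push_cast
        ring
    _ = ∑ᶠ q, (q.1.2 : ℂ) * f q * mono q u v := by
        refine finsum_shift _ shiftV_inj (fun q => (q.1.2 : ℂ) * f q * mono q u v) fun q hq => ?_
        obtain ⟨⟨q1, q2⟩, q3, q4⟩ := q
        have : q2 = 0 := by
          by_contra h
          exact hq ⟨((q1, q2 - 1), q3, q4), by simp only [shiftV]; congr 2 <;> omega⟩
        simp [this]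

lemma euler_vb (f : MixedCoeff) (hfin : (Function.support f).Finite) (u v : ℂ) :
    eval (Dvb f) u v * (starRingEnd ℂ v) = ∑ᶠ p, (p.2.2 : ℂ) * f p * mono p u v := by
  have hsupp : (Function.support fun p => Dvb f p * mono p u v).Finite := by
    apply ((hfin.preimage shiftVb_inj.injOn).subset)
    intro p hp
    simp only [Function.mem_support, Dvb] at hp
    have : f (shiftVb p) ≠ 0 := by
      intro h
      exact hp (by simp [shiftVb] at h ⊢; simp [h])
    exact this
  calc eval (Dvb f) u v * (starRingEnd ℂ v)
      = (∑ᶠ p, Dvb f p * mono p u v) * (starRingEnd ℂ v) := rfl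
    _ = ∑ᶠ p, Dvb f p * mono p u v * (starRingEnd ℂ v) := finsum_mul _ _
    _ = ∑ᶠ p, ((shiftVb p).2.2 : ℂ) * f (shiftVb p) * mono (shiftVb p) u v := by
        refine finsum_congr fun p => ?_
        simp only [Dvb, shiftVb, mono]
        push_cast
        ring
    _ = ∑ᶠ q, (q.2.2 : ℂ) * f q * mono q u v := by
        refine finsum_shift _ shiftVb_inj (fun q => (q.2.2 : ℂ) * f q * mono q u v) fun q hq => ?_
        obtain ⟨⟨q1, q2⟩, q3, q4⟩ := q
        have : q4 = 0 := by
          by_contra h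
          exact hq ⟨((q1, q2), q3, q4 - 1), by simp only [shiftVb]; congr 2 <;> omega⟩
        simp [this]


/-- if the Newton principal part of `c` is u-semiholomorphic (no boundary
monomial involves `ū`) and the Newton boundary is inner non-degenerate, then the face
function of every non-extreme vertex has no zeros in `(ℂ*)²`. -/
theorem nonextreme_vertex_face_no_zeros
    (c : MixedCoeff) (hfin : FiniteSupp c)
    (hN : ∃ P, IsFaceWeight c P)
    (hsemi : ∀ p, c p ≠ 0 → OnBoundary c p → p.2.1 = 0)
    (hinner : InnerNonDeg c) :
    ∀ w, NonExtremeVertex c w → ∀ u v : ℂ, u ≠ 0 → v ≠ 0 →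
      eval (vertexFace w c) u v ≠ 0 := by
  intro w hw u v hu hv heval
  have hw' := hw
  obtain ⟨-, P, Q, hP, hQ, -, hPw, hQw⟩ := hw'
  set c' := vertexFace w c with hc'
  have hkey : ∀ p, c' p ≠ 0 → p.1.1 = w.1 ∧ p.2.1 = 0 ∧ p.1.2 + p.2.2 = w.2 := by
    intro p hp
    have hew : expo p = w := by
      by_contra h
      simp [hc', vertexFace, h] at hp
    have hcp : c p ≠ 0 := by simpa [hc', vertexFace, hew] using hp
    have hob : OnBoundary c p := ⟨P, hP.1, hP.2.1, by rw [hew]; exact hPw⟩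
    have h21 : p.2.1 = 0 := hsemi p hcp hob
    simp only [expo, Prod.ext_iff] at hew
    exact ⟨by omega, h21, hew.2⟩
  have hfin' : (Function.support c').Finite := by
    apply hfin.subset
    intro p hp
    simp only [Function.mem_support, hc', vertexFace] at hp ⊢
    intro h
    apply hp
    split <;> simp [h]
  have hsup : (Function.support fun p => c' p * mono p u v).Finite := by
    simpa using support_mul_sub c' hfin' (fun _ => 1) u v
  have hDub : eval (Dub c') u v = 0 := by
    have hz : ∀ p, Dub c' p = 0 := by
      intro p
      have : c' (p.1, (p.2.1 + 1, p.2.2)) = 0 := by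
        by_contra h
        have := (hkey _ h).2.1
        simp at this
      simp [Dub, this]
    simp [eval, hz]
  have hDu : eval (Du c') u v = 0 := by
    have h1 := euler_u c' hfin' u v
    have h2 : ∑ᶠ p, (p.1.1 : ℂ) * c' p * mono p u v = (w.1 : ℂ) * eval c' u v := by
      rw [eval, mul_finsum _ _]
      refine finsum_congr fun p => ?_
      by_cases h : c' p = 0
      · simp [h]
      · rw [(hkey p h).1]; ring
    have h3 : eval (Du c') u v * u = 0 := by rw [h1, h2, heval, mul_zero]
    exact (mul_eq_zero.mp h3).resolve_right hu
  have hV : eval (Dv c') u v * v + eval (Dvb c') u v * (starRingEnd ℂ v) = 0 := by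
    rw [euler_v c' hfin' u v, euler_vb c' hfin' u v,
      ← finsum_add_distrib (support_mul_sub c' hfin' _ u v) (support_mul_sub c' hfin' _ u v)]
    have hcongr : ∀ p, (p.1.2 : ℂ) * c' p * mono p u v + (p.2.2 : ℂ) * c' p * mono p u v
        = (w.2 : ℂ) * (c' p * mono p u v) := by
      intro p
      by_cases h : c' p = 0
      · simp [h]
      · have h22 := (hkey p h).2.2
        have : ((p.1.2 : ℂ) + (p.2.2 : ℂ)) = (w.2 : ℂ) := by exact_mod_cast congrArg Nat.cast h22
        linear_combination (c' p * mono p u v) * this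
    rw [finsum_congr hcongr, ← mul_finsum _ _]
    rw [show (∑ᶠ p, c' p * mono p u v) = eval c' u v from rfl, heval, mul_zero]
  have hnorm : ‖eval (Dv c') u v‖ = ‖eval (Dvb c') u v‖ := by
    have h4 : eval (Dv c') u v * v = -(eval (Dvb c') u v * (starRingEnd ℂ v)) := by
      linear_combination hV
    have h5 := congrArg norm h4
    rw [norm_neg, norm_mul, norm_mul, RCLike.norm_conj] at h5
    exact mul_right_cancel₀ (norm_ne_zero_iff.mpr hv) h5
  exact hinner.2.2.2 w hw u v hu hv heval
    ⟨by rw [hDu, hDub]; simp, by rw [hDu, hDub], hnorm⟩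
end
end

section
/- The semiholomorphic boundary polynomial f(u,v,v̄) = u⁸ + v³u² + v̄⁵u − 2(v⁷+v̄⁷) has an inner non-degenerate Newton boundary, but its face function at the vertex (0,7), namely f_{Δ₁} = −2(v⁷+v̄⁷), is Newton degenerate (i.e., has a critical point on its zero set in (C*)²). -/
open Complex

noncomputable section

/-- The coefficients of `f(u,v,v̄) = u⁸ + v³u² + v̄⁵u − 2(v⁷ + v̄⁷)`. -/
def c9 : MixedCoeff := fun p =>
  if p = ((8, 0), (0, 0)) then 1
  else if p = ((2, 3), (0, 0)) then 1
  else if p = ((1, 0), (0, 5)) then 1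
  else if p = ((0, 7), (0, 0)) then -2
  else if p = ((0, 0), (0, 7)) then -2
  else 0


-- ==================== auxiliary lemmas ====================

section Aux

/-- The support of `c9`. -/
def S9 : Finset MixedIdx :=
  {((8,0),(0,0)), ((2,3),(0,0)), ((1,0),(0,5)), ((0,7),(0,0)), ((0,0),(0,7))}

lemma eval_eq_sum (c : MixedCoeff) (S : Finset MixedIdx)
    (h : ∀ p, c p ≠ 0 → p ∈ S) (u v : ℂ) :
    eval c u v = ∑ p ∈ S, c p * mono p u v := by
  apply finsum_eq_sum_of_support_subset
  intro p hp
  have : c p ≠ 0 := by intro h0; apply hp; simp [h0]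
  exact_mod_cast h p this

lemma c9_supp : ∀ p, c9 p ≠ 0 → p ∈ S9 := by
  intro p hp
  unfold c9 at hp
  split_ifs at hp with h1 h2 h3 h4 h5 <;> simp_all [S9]

lemma face_supp (P : ℕ × ℕ) : ∀ p, face P c9 p ≠ 0 → p ∈ S9 := by
  intro p hp
  apply c9_supp
  intro h0; apply hp; simp [face, h0]

lemma vf_supp (w : ℕ × ℕ) : ∀ p, vertexFace w c9 p ≠ 0 → p ∈ S9 := by
  intro p hp
  apply c9_supp
  intro h0; apply hp; simp [vertexFace, h0]

lemma Du_supp {c : MixedCoeff} {S : Finset MixedIdx} (h : ∀ p, c p ≠ 0 → p ∈ S) :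
    ∀ p, Du c p ≠ 0 → p ∈ S.image (fun q => ((q.1.1 - 1, q.1.2), q.2)) := by
  intro p hp
  have hc : c ((p.1.1 + 1, p.1.2), p.2) ≠ 0 := by
    intro h0; apply hp; simp [Du, h0]
  exact Finset.mem_image.2 ⟨_, h _ hc, by simp⟩

lemma Dub_supp {c : MixedCoeff} {S : Finset MixedIdx} (h : ∀ p, c p ≠ 0 → p ∈ S) :
    ∀ p, Dub c p ≠ 0 → p ∈ S.image (fun q => (q.1, (q.2.1 - 1, q.2.2))) := by
  intro p hp
  have hc : c (p.1, (p.2.1 + 1, p.2.2)) ≠ 0 := by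
    intro h0; apply hp; simp [Dub, h0]
  exact Finset.mem_image.2 ⟨_, h _ hc, by simp⟩

lemma Dv_supp {c : MixedCoeff} {S : Finset MixedIdx} (h : ∀ p, c p ≠ 0 → p ∈ S) :
    ∀ p, Dv c p ≠ 0 → p ∈ S.image (fun q => ((q.1.1, q.1.2 - 1), q.2)) := by
  intro p hp
  have hc : c ((p.1.1, p.1.2 + 1), p.2) ≠ 0 := by
    intro h0; apply hp; simp [Dv, h0]
  exact Finset.mem_image.2 ⟨_, h _ hc, by simp⟩

lemma Dvb_supp {c : MixedCoeff} {S : Finset MixedIdx} (h : ∀ p, c p ≠ 0 → p ∈ S) :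
    ∀ p, Dvb c p ≠ 0 → p ∈ S.image (fun q => (q.1, (q.2.1, q.2.2 - 1))) := by
  intro p hp
  have hc : c (p.1, (p.2.1, p.2.2 + 1)) ≠ 0 := by
    intro h0; apply hp; simp [Dvb, h0]
  exact Finset.mem_image.2 ⟨_, h _ hc, by simp⟩

lemma dmin21 : dmin (2,1) c9 = 7 := by
  have hmem : (7:ℕ) ∈ {n : ℕ | ∃ p, c9 p ≠ 0 ∧ ellP (2,1) (expo p) = n} :=
    ⟨((2,3),(0,0)), by simp [c9], by simp [ellP, expo]⟩
  apply le_antisymm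
  · exact Nat.sInf_le hmem
  · apply le_csInf ⟨7, hmem⟩
    rintro n ⟨p, hp, rfl⟩
    have := c9_supp p hp
    fin_cases this <;> simp [ellP, expo]

lemma dmin12 : dmin (1,2) c9 = 8 := by
  have hmem : (8:ℕ) ∈ {n : ℕ | ∃ p, c9 p ≠ 0 ∧ ellP (1,2) (expo p) = n} :=
    ⟨((8,0),(0,0)), by simp [c9], by simp [ellP, expo]⟩
  apply le_antisymm
  · exact Nat.sInf_le hmem
  · apply le_csInf ⟨8, hmem⟩
    rintro n ⟨p, hp, rfl⟩
    have := c9_supp p hp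
    fin_cases this <;> simp [ellP, expo]

-- evaluation of the two face functions and their Wirtinger derivatives

lemma evalA (u v : ℂ) : eval (face (2,1) c9) u v
    = u^2*v^3 + u*(starRingEnd ℂ v)^5 - 2*v^7 - 2*(starRingEnd ℂ v)^7 := by
  rw [eval_eq_sum _ S9 (face_supp _)]
  simp [S9, face, c9, mono, dmin21, ellP, expo, Prod.ext_iff]
  ring

lemma evalA_Du (u v : ℂ) : eval (Du (face (2,1) c9)) u v
    = 2*u*v^3 + (starRingEnd ℂ v)^5 := by
  rw [eval_eq_sum _ _ (Du_supp (face_supp _))]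
  simp [S9, face, c9, mono, Du, dmin21, ellP, expo, Prod.ext_iff]
  ring

lemma evalA_Dub (u v : ℂ) : eval (Dub (face (2,1) c9)) u v = 0 := by
  rw [eval_eq_sum _ _ (Dub_supp (face_supp _))]
  simp [S9, face, c9, mono, Dub, dmin21, ellP, expo, Prod.ext_iff]

lemma evalA_Dv (u v : ℂ) : eval (Dv (face (2,1) c9)) u v = 3*u^2*v^2 - 14*v^6 := by
  rw [eval_eq_sum _ _ (Dv_supp (face_supp _))]
  simp [S9, face, c9, mono, Dv, dmin21, ellP, expo, Prod.ext_iff]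
  ring

lemma evalA_Dvb (u v : ℂ) : eval (Dvb (face (2,1) c9)) u v
    = 5*u*(starRingEnd ℂ v)^4 - 14*(starRingEnd ℂ v)^6 := by
  rw [eval_eq_sum _ _ (Dvb_supp (face_supp _))]
  simp [S9, face, c9, mono, Dvb, dmin21, ellP, expo, Prod.ext_iff]
  ring

lemma evalB_Du (u v : ℂ) : eval (Du (face (1,2) c9)) u v = 8*u^7 + 2*u*v^3 := by
  rw [eval_eq_sum _ _ (Du_supp (face_supp _))]
  simp [S9, face, c9, mono, Du, dmin12, ellP, expo, Prod.ext_iff]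
  ring

lemma evalB_Dub (u v : ℂ) : eval (Dub (face (1,2) c9)) u v = 0 := by
  rw [eval_eq_sum _ _ (Dub_supp (face_supp _))]
  simp [S9, face, c9, mono, Dub, dmin12, ellP, expo, Prod.ext_iff]

lemma evalB_Dv (u v : ℂ) : eval (Dv (face (1,2) c9)) u v = 3*u^2*v^2 := by
  rw [eval_eq_sum _ _ (Dv_supp (face_supp _))]
  simp [S9, face, c9, mono, Dv, dmin12, ellP, expo, Prod.ext_iff]
  ring

lemma evalB_Dvb (u v : ℂ) : eval (Dvb (face (1,2) c9)) u v = 0 := by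
  rw [eval_eq_sum _ _ (Dvb_supp (face_supp _))]
  simp [S9, face, c9, mono, Dvb, dmin12, ellP, expo, Prod.ext_iff]

-- the two vertex face functions

lemma evalC (u v : ℂ) : eval (vertexFace (2,3) c9) u v = u^2*v^3 := by
  rw [eval_eq_sum _ S9 (vf_supp _)]
  simp [S9, vertexFace, c9, mono, expo, Prod.ext_iff]

lemma evalD (u v : ℂ) : eval (vertexFace (0,7) c9) u v
    = -2*v^7 - 2*(starRingEnd ℂ v)^7 := by
  rw [eval_eq_sum _ S9 (vf_supp _)]
  simp [S9, vertexFace, c9, mono, expo, Prod.ext_iff]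
  ring

lemma evalD_Du (u v : ℂ) : eval (Du (vertexFace (0,7) c9)) u v = 0 := by
  rw [eval_eq_sum _ _ (Du_supp (vf_supp _))]
  simp [S9, vertexFace, c9, mono, Du, expo, Prod.ext_iff]

lemma evalD_Dub (u v : ℂ) : eval (Dub (vertexFace (0,7) c9)) u v = 0 := by
  rw [eval_eq_sum _ _ (Dub_supp (vf_supp _))]
  simp [S9, vertexFace, c9, mono, Dub, expo, Prod.ext_iff]

lemma evalD_Dv (u v : ℂ) : eval (Dv (vertexFace (0,7) c9)) u v = -14*v^6 := by
  rw [eval_eq_sum _ _ (Dv_supp (vf_supp _))]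
  simp [S9, vertexFace, c9, mono, Dv, expo, Prod.ext_iff]
  left; norm_num

lemma evalD_Dvb (u v : ℂ) : eval (Dvb (vertexFace (0,7) c9)) u v
    = -14*(starRingEnd ℂ v)^6 := by
  rw [eval_eq_sum _ _ (Dvb_supp (vf_supp _))]
  simp [S9, vertexFace, c9, mono, Dvb, expo, Prod.ext_iff]
  left; norm_num

-- classification of the combinatorial data

lemma fw_classify {P : ℕ × ℕ} (h : IsFaceWeight c9 P) : P = (2,1) ∨ P = (1,2) := by
  obtain ⟨ha, hb, hg, p, q, hp, hq, hne, hlp, hlq⟩ := h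
  obtain ⟨a, b⟩ := P
  simp only at ha hb hg hlp hlq
  have hd : dmin (a,b) c9 ≤ 2*a + 3*b := by
    apply Nat.sInf_le
    exact ⟨((2,3),(0,0)), by simp [c9], by simp [ellP, expo]; ring⟩
  have hep : expo p = (8,0) ∨ expo p = (2,3) ∨ expo p = (1,5) ∨ expo p = (0,7) := by
    have := c9_supp p hp; fin_cases this <;> simp [expo]
  have heq : expo q = (8,0) ∨ expo q = (2,3) ∨ expo q = (1,5) ∨ expo q = (0,7) := by
    have := c9_supp q hq; fin_cases this <;> simp [expo]
  have key : a = 2*b ∨ b = 2*a := by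
    rcases hep with h1 | h1 | h1 | h1 <;> rcases heq with h2 | h2 | h2 | h2 <;>
      rw [h1] at hlp <;> rw [h2] at hlq <;> rw [h1, h2] at hne <;>
      simp only [ellP] at hlp hlq <;>
      first
        | (exact absurd rfl hne)
        | omega
  rcases key with h | h
  · left
    have hgg : Nat.gcd (2*b) b = b := Nat.gcd_eq_right ⟨2, by ring⟩
    rw [h] at hg ⊢
    rw [hgg] at hg
    simp [hg]
  · right
    have hgg : Nat.gcd a (2*a) = a := Nat.gcd_eq_left ⟨2, by ring⟩
    rw [h] at hg ⊢
    rw [hgg] at hg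
    simp [hg]

lemma fw21 : IsFaceWeight c9 (2,1) := by
  refine ⟨by norm_num, by norm_num, by norm_num, ((2,3),(0,0)), ((0,7),(0,0)),
    by simp [c9], by simp [c9], by simp [expo], ?_, ?_⟩ <;>
    simp [ellP, expo, dmin21]

lemma fw12 : IsFaceWeight c9 (1,2) := by
  refine ⟨by norm_num, by norm_num, by norm_num, ((8,0),(0,0)), ((2,3),(0,0)),
    by simp [c9], by simp [c9], by simp [expo], ?_, ?_⟩ <;>
    simp [ellP, expo, dmin12]

lemma steepest_eq {P : ℕ × ℕ} (h : IsSteepest c9 P) : P = (2,1) := by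
  rcases fw_classify h.1 with h1 | h1
  · exact h1
  · exfalso
    have := h.2 (2,1) fw21
    rw [h1] at this
    norm_num at this

lemma leastSteep_eq {P : ℕ × ℕ} (h : IsLeastSteep c9 P) : P = (1,2) := by
  rcases fw_classify h.1 with h1 | h1
  · exfalso
    have := h.2 (1,2) fw12
    rw [h1] at this
    norm_num at this
  · exact h1

lemma nev_eq {w : ℕ × ℕ} (h : NonExtremeVertex c9 w) : w = (2,3) := by
  obtain ⟨-, P, Q, hPf, hQf, hne, hP, hQ⟩ := h
  rcases fw_classify hPf with h1 | h1 <;> rcases fw_classify hQf with h2 | h2 <;>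
    subst h1 <;> subst h2
  · norm_num at hne
  · rw [dmin21] at hP; rw [dmin12] at hQ
    simp only [ellP] at hP hQ
    obtain ⟨w1, w2⟩ := w
    simp only at hP hQ
    have : w1 = 2 ∧ w2 = 3 := by omega
    simp [this.1, this.2]
  · rw [dmin12] at hP; rw [dmin21] at hQ
    simp only [ellP] at hP hQ
    obtain ⟨w1, w2⟩ := w
    simp only at hP hQ
    have : w1 = 2 ∧ w2 = 3 := by omega
    simp [this.1, this.2]
  · norm_num at hne

-- the analytic heart

lemma sqnorm (z : ℂ) : ‖z‖^2 = z.re^2 + z.im^2 := by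
  rw [Complex.sq_norm, Complex.normSq_apply]; ring

lemma core (s : ℂ) (hn : ‖s‖ = 1) (he : s^10 + 8*s^7 + 8 = 0)
    (h3 : ‖3*s^10 - 56‖ = ‖10*s^3 + 56‖) : False := by
  set a := s^3 with ha
  set b := s^7 with hb
  have hna : ‖a‖ = 1 := by rw [ha, norm_pow, hn, one_pow]
  have hnb : ‖b‖ = 1 := by rw [hb, norm_pow, hn, one_pow]
  have e1 : a.re^2 + a.im^2 = 1 := by rw [← sqnorm, hna]; norm_num
  have e2 : b.re^2 + b.im^2 = 1 := by rw [← sqnorm, hnb]; norm_num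
  have hab7 : a^7 = b^3 := by rw [ha, hb]; ring
  have h10 : (-8 - 8*b : ℂ) = s^10 := by rw [hb]; linear_combination -he
  have hn10 : ‖(-8 - 8*b : ℂ)‖ = 1 := by rw [h10, norm_pow, hn, one_pow]
  have e5 : (-8 - 8*b : ℂ).re^2 + (-8 - 8*b : ℂ).im^2 = 1 := by rw [← sqnorm, hn10]; norm_num
  simp only [Complex.sub_re, Complex.sub_im, Complex.mul_re, Complex.mul_im,
    Complex.re_ofNat, Complex.im_ofNat, Complex.neg_re, Complex.neg_im] at e5
  have h3l : (3*s^10 - 56 : ℂ) = -80 - 24*b := by rw [hb]; linear_combination 3*he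
  have h3r : (10*s^3 + 56 : ℂ) = 10*a + 56 := by rw [ha]
  rw [h3l, h3r] at h3
  have e6 : (-80 - 24*b : ℂ).re^2 + (-80 - 24*b : ℂ).im^2
      = (10*a + 56 : ℂ).re^2 + (10*a + 56 : ℂ).im^2 := by
    rw [← sqnorm, ← sqnorm, h3]
  simp only [Complex.sub_re, Complex.sub_im, Complex.add_re, Complex.add_im,
    Complex.mul_re, Complex.mul_im, Complex.re_ofNat, Complex.im_ofNat,
    Complex.neg_re, Complex.neg_im] at e6
  have e7 : a.re^7 - 21*a.re^5*a.im^2 + 35*a.re^3*a.im^4 - 7*a.re*a.im^6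
      = b.re^3 - 3*b.re*b.im^2 := by
    have := congrArg Complex.re hab7
    simp only [pow_succ, pow_zero, one_mul, Complex.mul_re, Complex.mul_im] at this
    linear_combination this
  set xa := a.re; set yA := a.im; set xb := b.re; set yb := b.im
  have hxb : xb = -127/128 := by linarith [e5, e2]
  have hyb2 : yb^2 = 255/16384 := by linear_combination e2 - (xb - 127/128)*hxb
  have hxa : xa = -1/16 := by linarith [e6, e1, e2, hxb]
  have hya2 : yA^2 = 255/256 := by linear_combination e1 - (xa - 1/16)*hxa
  rw [hxa, hxb, show yA^4 = (yA^2)^2 by ring, show yA^6 = (yA^2)^3 by ring,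
    hya2, hyb2] at e7
  norm_num at e7

lemma faceA_aux (u v : ℂ) (hv : v ≠ 0)
    (h0 : u^2*v^3 + u*(starRingEnd ℂ v)^5 - 2*v^7 - 2*(starRingEnd ℂ v)^7 = 0)
    (h1 : 2*u*v^3 + (starRingEnd ℂ v)^5 = 0)
    (h3 : ‖3*u^2*v^2 - 14*v^6‖ = ‖5*u*(starRingEnd ℂ v)^4 - 14*(starRingEnd ℂ v)^6‖) :
    False := by
  set V := (starRingEnd ℂ) v with hVdef
  have hVn : ‖V‖ = ‖v‖ := RCLike.norm_conj v
  have hrv : ‖v‖ ≠ 0 := norm_ne_zero_iff.2 hv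
  have hB : V^10 + 8*v^3*V^7 + 8*v^10 = 0 := by
    linear_combination (-4*v^3)*h0 + (2*u*v^3 + V^5)*h1
  set s := V / v with hsdef
  have hs : ‖s‖ = 1 := by
    rw [hsdef, norm_div, hVn, div_self hrv]
  have he : s^10 + 8*s^7 + 8 = 0 := by
    have h : s^10 + 8*s^7 + 8 = (V^10 + 8*v^3*V^7 + 8*v^10)/v^10 := by
      rw [hsdef]; field_simp
    rw [h, hB, zero_div]
  have eA : (3*s^10 - 56) * v^10 = 4*v^4*(3*u^2*v^2 - 14*v^6) := by
    rw [hsdef]; field_simp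
    linear_combination (-3)*(2*u*v^3 - V^5)*h1
  have eB : (10*s^3 + 56) * (v^3*V^6) = -4*v^3*(5*u*V^4 - 14*(starRingEnd ℂ v)^6) := by
    rw [hsdef]; field_simp
    linear_combination 10*V^4*h1
  have key : ‖(3*s^10 - 56) * v^10‖ = ‖(10*s^3 + 56) * (v^3*V^6) * v‖ := by
    rw [eA, eB, show (-4*v^3*(5*u*V^4 - 14*(starRingEnd ℂ v)^6))*v
        = 4*v^4*(-(5*u*V^4 - 14*(starRingEnd ℂ v)^6)) by ring]
    simp only [norm_mul, norm_neg, h3]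
    rfl
  have h3s : ‖3*s^10 - 56‖ = ‖10*s^3 + 56‖ := by
    have hk : ‖3*s^10 - 56‖ * ‖v‖^10 = ‖10*s^3 + 56‖ * ‖v‖^10 := by
      have hthis := key
      simp only [norm_mul, norm_pow, hVn] at hthis
      calc ‖3*s^10 - 56‖ * ‖v‖^10 = ‖10*s^3 + 56‖ * (‖v‖^3*‖v‖^6) * ‖v‖ := hthis
        _ = ‖10*s^3 + 56‖ * ‖v‖^10 := by ring
    exact mul_right_cancel₀ (pow_ne_zero 10 hrv) hk
  exact core s hs he h3s

/-- No critical points of `f_{P₁}` on its zero set off `{v = 0}`. -/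
lemma faceA_nondeg (u v : ℂ) (hv : v ≠ 0)
    (hev : eval (face (2,1) c9) u v = 0) : ¬ Crit (face (2,1) c9) u v := by
  rintro ⟨-, hs2, hs3⟩
  rw [evalA] at hev
  rw [evalA_Du, evalA_Dub, norm_zero] at hs2
  rw [evalA_Dv, evalA_Dvb] at hs3
  exact faceA_aux u v hv hev (norm_eq_zero.mp hs2) hs3

/-- No critical points of `f_{P₂}` off `{u = 0}`. -/
lemma faceB_nondeg (u v : ℂ) (hu : u ≠ 0) : ¬ Crit (face (1,2) c9) u v := by
  rintro ⟨-, hs2, hs3⟩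
  rw [evalB_Du, evalB_Dub, norm_zero] at hs2
  rw [evalB_Dv, evalB_Dvb, norm_zero] at hs3
  have h1 : 8*u^7 + 2*u*v^3 = 0 := norm_eq_zero.mp hs2
  have h2 : 3*u^2*v^2 = 0 := norm_eq_zero.mp hs3
  have hv : v = 0 := by
    rcases mul_eq_zero.mp h2 with h | h
    · rcases mul_eq_zero.mp h with h | h
      · norm_num at h
      · exact absurd (pow_eq_zero_iff (by norm_num)|>.mp h) hu
    · exact pow_eq_zero_iff (by norm_num) |>.mp h
  rw [hv] at h1
  apply hu
  have : (8:ℂ) * u^7 = 0 := by linear_combination h1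
  have h7 : u^7 = 0 := by
    rcases mul_eq_zero.mp this with h | h
    · norm_num at h
    · exact h
  exact pow_eq_zero_iff (by norm_num) |>.mp h7

end Aux

/-- the semiholomorphic boundary polynomial
`f = u⁸ + v³u² + v̄⁵u − 2(v⁷+v̄⁷)` has an inner non-degenerate Newton boundary, but its
face function at the vertex `(0,7)`, namely `−2(v⁷+v̄⁷)`, is Newton degenerate: it has a
critical point on its zero set in `(ℂ*)²`. -/
theorem c9_inner_nondeg_but_vertex_degenerate :
    InnerNonDeg c9 ∧
    ∃ u v : ℂ, u ≠ 0 ∧ v ≠ 0 ∧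
      eval (vertexFace (0, 7) c9) u v = 0 ∧ Crit (vertexFace (0, 7) c9) u v := by
  constructor
  · refine ⟨?_, ?_, ?_, ?_⟩
    · intro P hP u v hv hev
      rw [steepest_eq hP] at hev ⊢
      exact faceA_nondeg u v hv hev
    · intro P hP u v hu _
      rw [leastSteep_eq hP]
      exact faceB_nondeg u v hu
    · intro P hP u v hu hv hev
      rcases fw_classify hP with h | h <;> subst h
      · exact faceA_nondeg u v hv hev
      · exact faceB_nondeg u v hu
    · intro w hw u v hu hv hev
      rw [nev_eq hw, evalC] at hev
      intro _
      rcases mul_eq_zero.mp hev with h | h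
      · exact hu (pow_eq_zero_iff (by norm_num) |>.mp h)
      · exact hv (pow_eq_zero_iff (by norm_num) |>.mp h)
  · refine ⟨1, Complex.exp (↑Real.pi * Complex.I / 14), one_ne_zero,
      Complex.exp_ne_zero _, ?_, ?_, ?_, ?_⟩
    · rw [evalD]
      have hv7 : (Complex.exp (↑Real.pi * Complex.I / 14))^7 = Complex.I := by
        rw [← Complex.exp_nat_mul]
        have h14 : ((7:ℕ):ℂ) * (↑Real.pi * Complex.I / 14) = (↑Real.pi/2) * Complex.I := by
          push_cast; ring
        rw [h14, Complex.exp_mul_I, Complex.cos_pi_div_two, Complex.sin_pi_div_two]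
        ring
      have hc7 : ((starRingEnd ℂ) (Complex.exp (↑Real.pi * Complex.I / 14)))^7
          = -Complex.I := by
        rw [← map_pow, hv7, Complex.conj_I]
      rw [hv7, hc7]
      ring
    · rw [evalD_Du, evalD_Dub]
      simp
    · rw [evalD_Du, evalD_Dub]
    · rw [evalD_Dv, evalD_Dvb]
      simp only [norm_mul, norm_neg, norm_pow, RCLike.norm_conj]
end
end

section
/- Let f : C² → C be a mixed polynomial with an inner Newton non-degenerate boundary (and at least one compact 1-face). Then f has a weakly isolated singularity at the origin: there is a neighbourhood U of 0 ∈ C² such that U ∩ V_f ∩ Σ_f = {0}, where V_f = f⁻¹(0) and Σ_f is the set of points where the real Jacobian of f : R⁴ → R² has rank ≤ 1. -/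
open Complex

noncomputable section

namespace WeakIso

open Filter Topology

/-! ### Support lemmas -/

lemma finiteSupp_comp {g : MixedCoeff} (h : FiniteSupp g) (f : MixedIdx → MixedIdx)
    (hf : Function.Injective f) (z : MixedIdx → ℂ) :
    FiniteSupp (fun p => z p * g (f p)) := by
  apply Set.Finite.subset (h.preimage hf.injOn)
  intro p hp
  simp only [Function.mem_support] at hp
  simp only [Set.mem_preimage, Function.mem_support]
  intro h0
  exact hp (by rw [h0, mul_zero])

lemma injDu : Function.Injective (fun p : MixedIdx => ((p.1.1 + 1, p.1.2), p.2)) := by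
  rintro ⟨⟨a1, a2⟩, a3⟩ ⟨⟨b1, b2⟩, b3⟩ hab
  simp only [Prod.mk.injEq] at hab
  obtain ⟨⟨h1, h2⟩, h3⟩ := hab
  simp only [Prod.mk.injEq]
  exact ⟨⟨by omega, h2⟩, h3⟩

lemma injDub : Function.Injective (fun p : MixedIdx => (p.1, (p.2.1 + 1, p.2.2))) := by
  rintro ⟨a1, ⟨a2, a3⟩⟩ ⟨b1, ⟨b2, b3⟩⟩ hab
  simp only [Prod.mk.injEq] at hab
  obtain ⟨h1, h2, h3⟩ := hab
  simp only [Prod.mk.injEq]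
  exact ⟨h1, by omega, h3⟩

lemma injDv : Function.Injective (fun p : MixedIdx => ((p.1.1, p.1.2 + 1), p.2)) := by
  rintro ⟨⟨a1, a2⟩, a3⟩ ⟨⟨b1, b2⟩, b3⟩ hab
  simp only [Prod.mk.injEq] at hab
  obtain ⟨⟨h1, h2⟩, h3⟩ := hab
  simp only [Prod.mk.injEq]
  exact ⟨⟨h1, by omega⟩, h3⟩

lemma injDvb : Function.Injective (fun p : MixedIdx => (p.1, (p.2.1, p.2.2 + 1))) := by
  rintro ⟨a1, ⟨a2, a3⟩⟩ ⟨b1, ⟨b2, b3⟩⟩ hab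
  simp only [Prod.mk.injEq] at hab
  obtain ⟨h1, h2, h3⟩ := hab
  simp only [Prod.mk.injEq]
  exact ⟨h1, h2, by omega⟩

lemma finiteSupp_Du {g : MixedCoeff} (h : FiniteSupp g) : FiniteSupp (Du g) :=
  finiteSupp_comp h _ injDu _

lemma finiteSupp_Dub {g : MixedCoeff} (h : FiniteSupp g) : FiniteSupp (Dub g) :=
  finiteSupp_comp h _ injDub _

lemma finiteSupp_Dv {g : MixedCoeff} (h : FiniteSupp g) : FiniteSupp (Dv g) :=
  finiteSupp_comp h _ injDv _

lemma finiteSupp_Dvb {g : MixedCoeff} (h : FiniteSupp g) : FiniteSupp (Dvb g) :=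
  finiteSupp_comp h _ injDvb _

lemma eval_eq_sum (g : MixedCoeff) (u v : ℂ) (T : Finset MixedIdx)
    (hT : Function.support g ⊆ T) :
    eval g u v = ∑ p ∈ T, g p * mono p u v := by
  apply finsum_eq_sum_of_support_subset
  intro p hp
  apply hT
  simp only [Function.mem_support] at hp ⊢
  intro h0
  exact hp (by rw [h0, zero_mul])

/-! ### Scaling and limits -/

lemma mono_scale (p : MixedIdx) (r t : ℝ) (a b : ℂ) :
    mono p ((r : ℂ) * a) ((t : ℂ) * b)
      = ((r ^ (expo p).1 * t ^ (expo p).2 : ℝ) : ℂ) * mono p a b := by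
  simp only [mono, expo, map_mul, Complex.conj_ofReal, mul_pow]
  push_cast
  ring

lemma tendsto_conj {a : ℕ → ℂ} {a₀ : ℂ} (ha : Tendsto a atTop (𝓝 a₀)) :
    Tendsto (fun k => (starRingEnd ℂ) (a k)) atTop (𝓝 ((starRingEnd ℂ) a₀)) := by
  have : Continuous (starRingEnd ℂ) := continuous_star
  exact (this.tendsto _).comp ha

lemma tendsto_mono (p : MixedIdx) {a b : ℕ → ℂ} {a₀ b₀ : ℂ}
    (ha : Tendsto a atTop (𝓝 a₀)) (hb : Tendsto b atTop (𝓝 b₀)) :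
    Tendsto (fun k => mono p (a k) (b k)) atTop (𝓝 (mono p a₀ b₀)) := by
  unfold mono
  exact (((ha.pow _).mul (hb.pow _)).mul ((tendsto_conj ha).pow _)).mul
    ((tendsto_conj hb).pow _)

/-- The main rescaling-limit lemma. -/
lemma main_tendsto (g : MixedCoeff) (hg : FiniteSupp g)
    (Cond : MixedIdx → Prop) [DecidablePred Cond]
    (ρ τ s : ℕ → ℝ)
    (a b : ℕ → ℂ) (a₀ b₀ : ℂ)
    (ha : Tendsto a atTop (𝓝 a₀)) (hb : Tendsto b atTop (𝓝 b₀))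
    (H : ∀ p : MixedIdx, g p ≠ 0 →
      Tendsto (fun k => ρ k ^ (expo p).1 * τ k ^ (expo p).2 / s k) atTop
        (𝓝 (if Cond p then (1 : ℝ) else 0))) :
    Tendsto (fun k => eval g ((ρ k : ℂ) * a k) ((τ k : ℂ) * b k) / (s k : ℂ)) atTop
      (𝓝 (eval (fun p => if Cond p then g p else 0) a₀ b₀)) := by
  classical
  set T : Finset MixedIdx := hg.toFinset with hTdef
  have hT : Function.support g ⊆ T := by
    intro p hp; exact (Set.Finite.mem_toFinset _).2 hp
  have key : ∀ k, eval g ((ρ k : ℂ) * a k) ((τ k : ℂ) * b k) / (s k : ℂ)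
      = ∑ p ∈ T, g p * ((ρ k ^ (expo p).1 * τ k ^ (expo p).2 / s k : ℝ) : ℂ)
          * mono p (a k) (b k) := by
    intro k
    rw [eval_eq_sum g _ _ T hT, Finset.sum_div]
    refine Finset.sum_congr rfl fun p _ => ?_
    rw [mono_scale]
    push_cast
    ring
  have hT' : Function.support (fun p => if Cond p then g p else 0) ⊆ T := by
    intro p hp
    simp only [Function.mem_support] at hp
    apply hT
    simp only [Function.mem_support]
    intro h0
    exact hp (by simp [h0])
  rw [eval_eq_sum _ _ _ T hT']
  refine Tendsto.congr (fun k => (key k).symm) ?_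
  apply tendsto_finset_sum
  intro p _
  by_cases hgp : g p = 0
  · simp only [hgp, zero_mul]
    simpa using tendsto_const_nhds
  · have h1 : Tendsto
        (fun k => ((ρ k ^ (expo p).1 * τ k ^ (expo p).2 / s k : ℝ) : ℂ)) atTop
        (𝓝 (((if Cond p then (1 : ℝ) else 0) : ℝ) : ℂ)) :=
      (Complex.continuous_ofReal.tendsto _).comp (H p hgp)
    have h2 := tendsto_mono p ha hb
    have h3 := (tendsto_const_nhds (x := g p) (f := atTop)).mul h1 |>.mul h2
    convert h3 using 2
    split_ifs <;> simp
end WeakIso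
namespace WeakIso

open Filter Topology

/-! ### dmin lemmas -/

lemma dmin_le {c : MixedCoeff} {P : ℕ × ℕ} {p : MixedIdx} (hp : c p ≠ 0) :
    dmin P c ≤ ellP P (expo p) :=
  Nat.sInf_le ⟨p, hp, rfl⟩

lemma dmin_attained {c : MixedCoeff} (P : ℕ × ℕ) {p₀ : MixedIdx} (hp₀ : c p₀ ≠ 0) :
    ∃ p, c p ≠ 0 ∧ ellP P (expo p) = dmin P c := by
  have hne : {n : ℕ | ∃ p, c p ≠ 0 ∧ ellP P (expo p) = n}.Nonempty :=
    ⟨ellP P (expo p₀), p₀, hp₀, rfl⟩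
  exact Nat.sInf_mem hne

/-! ### Derivatives of truncations -/

lemma Du_ite (c : MixedCoeff) (Cnd : ℕ × ℕ → Prop) [DecidablePred Cnd] :
    Du (fun p => if Cnd (expo p) then c p else 0)
      = fun p => if Cnd ((expo p).1 + 1, (expo p).2) then Du c p else 0 := by
  funext p
  have he : expo ((p.1.1 + 1, p.1.2), p.2) = ((expo p).1 + 1, (expo p).2) := by
    simp [expo, Prod.ext_iff]
    omega
  simp only [Du, he]
  split_ifs <;> simp

lemma Dub_ite (c : MixedCoeff) (Cnd : ℕ × ℕ → Prop) [DecidablePred Cnd] :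
    Dub (fun p => if Cnd (expo p) then c p else 0)
      = fun p => if Cnd ((expo p).1 + 1, (expo p).2) then Dub c p else 0 := by
  funext p
  have he : expo (p.1, (p.2.1 + 1, p.2.2)) = ((expo p).1 + 1, (expo p).2) := by
    simp [expo, Prod.ext_iff]
    omega
  simp only [Dub, he]
  split_ifs <;> simp

lemma Dv_ite (c : MixedCoeff) (Cnd : ℕ × ℕ → Prop) [DecidablePred Cnd] :
    Dv (fun p => if Cnd (expo p) then c p else 0)
      = fun p => if Cnd ((expo p).1, (expo p).2 + 1) then Dv c p else 0 := by
  funext p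
  have he : expo ((p.1.1, p.1.2 + 1), p.2) = ((expo p).1, (expo p).2 + 1) := by
    simp [expo, Prod.ext_iff]
    omega
  simp only [Dv, he]
  split_ifs <;> simp

lemma Dvb_ite (c : MixedCoeff) (Cnd : ℕ × ℕ → Prop) [DecidablePred Cnd] :
    Dvb (fun p => if Cnd (expo p) then c p else 0)
      = fun p => if Cnd ((expo p).1, (expo p).2 + 1) then Dvb c p else 0 := by
  funext p
  have he : expo (p.1, (p.2.1, p.2.2 + 1)) = ((expo p).1, (expo p).2 + 1) := by
    simp [expo, Prod.ext_iff]
    omega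
  simp only [Dvb, he]
  split_ifs <;> simp

/-! ### The core limit lemma -/

/-- Core rescaling lemma: along a rescaled sequence of zeroes of `c` which are
critical points, the truncation of `c` determined by `Cnd` has a zero which is a
critical point at the limit. -/
lemma core (c : MixedCoeff) (hfin : FiniteSupp c)
    (Cnd : ℕ × ℕ → Prop) [DecidablePred Cnd]
    (ρ τ σ : ℕ → ℝ) (hρ : ∀ k, 0 < ρ k) (hτ : ∀ k, 0 < τ k) (hσ : ∀ k, 0 < σ k)
    (a b : ℕ → ℂ) (a₀ b₀ : ℂ)
    (ha : Tendsto a atTop (𝓝 a₀)) (hb : Tendsto b atTop (𝓝 b₀))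
    (H : ∀ p : MixedIdx, c p ≠ 0 →
      Tendsto (fun k => ρ k ^ (expo p).1 * τ k ^ (expo p).2 / σ k) atTop
        (𝓝 (if Cnd (expo p) then (1 : ℝ) else 0)))
    (hz : ∀ k, eval c ((ρ k : ℂ) * a k) ((τ k : ℂ) * b k) = 0)
    (hcrit : ∀ k, Crit c ((ρ k : ℂ) * a k) ((τ k : ℂ) * b k)) :
    eval (fun p => if Cnd (expo p) then c p else 0) a₀ b₀ = 0 ∧
      Crit (fun p => if Cnd (expo p) then c p else 0) a₀ b₀ := by
  classical
  set g' : MixedCoeff := fun p => if Cnd (expo p) then c p else 0 with hg'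
  -- the five limit statements
  have hz' : Tendsto (fun k => eval c ((ρ k : ℂ) * a k) ((τ k : ℂ) * b k) / (σ k : ℂ))
      atTop (𝓝 (eval g' a₀ b₀)) :=
    main_tendsto c hfin (fun p => Cnd (expo p)) ρ τ σ a b a₀ b₀ ha hb H
  have hEval : eval g' a₀ b₀ = 0 := by
    refine tendsto_nhds_unique (hz'.congr' ?_) tendsto_const_nhds
    filter_upwards with k
    rw [hz k, zero_div]
  -- scaled derivative limits
  have hHu : ∀ p : MixedIdx, Du c p ≠ 0 →
      Tendsto (fun k => ρ k ^ (expo p).1 * τ k ^ (expo p).2 / (σ k / ρ k)) atTop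
        (𝓝 (if Cnd ((expo p).1 + 1, (expo p).2) then (1 : ℝ) else 0)) := by
    intro p hp
    have hcp : c ((p.1.1 + 1, p.1.2), p.2) ≠ 0 := by
      intro h0; exact hp (by simp [Du, h0])
    have he : expo ((p.1.1 + 1, p.1.2), p.2) = ((expo p).1 + 1, (expo p).2) := by
      simp [expo, Prod.ext_iff]; omega
    have := H _ hcp
    rw [he] at this
    refine this.congr fun k => ?_
    have h1 : ρ k ≠ 0 := (hρ k).ne'
    have h2 : σ k ≠ 0 := (hσ k).ne'
    field_simp
    ring
  have hHub : ∀ p : MixedIdx, Dub c p ≠ 0 →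
      Tendsto (fun k => ρ k ^ (expo p).1 * τ k ^ (expo p).2 / (σ k / ρ k)) atTop
        (𝓝 (if Cnd ((expo p).1 + 1, (expo p).2) then (1 : ℝ) else 0)) := by
    intro p hp
    have hcp : c (p.1, (p.2.1 + 1, p.2.2)) ≠ 0 := by
      intro h0; exact hp (by simp [Dub, h0])
    have he : expo (p.1, (p.2.1 + 1, p.2.2)) = ((expo p).1 + 1, (expo p).2) := by
      simp [expo, Prod.ext_iff]; omega
    have := H _ hcp
    rw [he] at this
    refine this.congr fun k => ?_
    have h1 : ρ k ≠ 0 := (hρ k).ne'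
    have h2 : σ k ≠ 0 := (hσ k).ne'
    field_simp
    ring
  have hHv : ∀ p : MixedIdx, Dv c p ≠ 0 →
      Tendsto (fun k => ρ k ^ (expo p).1 * τ k ^ (expo p).2 / (σ k / τ k)) atTop
        (𝓝 (if Cnd ((expo p).1, (expo p).2 + 1) then (1 : ℝ) else 0)) := by
    intro p hp
    have hcp : c ((p.1.1, p.1.2 + 1), p.2) ≠ 0 := by
      intro h0; exact hp (by simp [Dv, h0])
    have he : expo ((p.1.1, p.1.2 + 1), p.2) = ((expo p).1, (expo p).2 + 1) := by
      simp [expo, Prod.ext_iff]; omega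
    have := H _ hcp
    rw [he] at this
    refine this.congr fun k => ?_
    have h1 : τ k ≠ 0 := (hτ k).ne'
    have h2 : σ k ≠ 0 := (hσ k).ne'
    field_simp
    ring
  have hHvb : ∀ p : MixedIdx, Dvb c p ≠ 0 →
      Tendsto (fun k => ρ k ^ (expo p).1 * τ k ^ (expo p).2 / (σ k / τ k)) atTop
        (𝓝 (if Cnd ((expo p).1, (expo p).2 + 1) then (1 : ℝ) else 0)) := by
    intro p hp
    have hcp : c (p.1, (p.2.1, p.2.2 + 1)) ≠ 0 := by
      intro h0; exact hp (by simp [Dvb, h0])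
    have he : expo (p.1, (p.2.1, p.2.2 + 1)) = ((expo p).1, (expo p).2 + 1) := by
      simp [expo, Prod.ext_iff]; omega
    have := H _ hcp
    rw [he] at this
    refine this.congr fun k => ?_
    have h1 : τ k ≠ 0 := (hτ k).ne'
    have h2 : σ k ≠ 0 := (hσ k).ne'
    field_simp
    ring
  have hA : Tendsto (fun k => eval (Du c) ((ρ k : ℂ) * a k) ((τ k : ℂ) * b k)
      / ((σ k / ρ k : ℝ) : ℂ)) atTop (𝓝 (eval (Du g') a₀ b₀)) := by
    rw [hg', Du_ite]
    exact main_tendsto (Du c) (finiteSupp_Du hfin)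
      (fun p => Cnd ((expo p).1 + 1, (expo p).2)) ρ τ _ a b a₀ b₀ ha hb hHu
  have hB : Tendsto (fun k => eval (Dub c) ((ρ k : ℂ) * a k) ((τ k : ℂ) * b k)
      / ((σ k / ρ k : ℝ) : ℂ)) atTop (𝓝 (eval (Dub g') a₀ b₀)) := by
    rw [hg', Dub_ite]
    exact main_tendsto (Dub c) (finiteSupp_Dub hfin)
      (fun p => Cnd ((expo p).1 + 1, (expo p).2)) ρ τ _ a b a₀ b₀ ha hb hHub
  have hC : Tendsto (fun k => eval (Dv c) ((ρ k : ℂ) * a k) ((τ k : ℂ) * b k)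
      / ((σ k / τ k : ℝ) : ℂ)) atTop (𝓝 (eval (Dv g') a₀ b₀)) := by
    rw [hg', Dv_ite]
    exact main_tendsto (Dv c) (finiteSupp_Dv hfin)
      (fun p => Cnd ((expo p).1, (expo p).2 + 1)) ρ τ _ a b a₀ b₀ ha hb hHv
  have hD : Tendsto (fun k => eval (Dvb c) ((ρ k : ℂ) * a k) ((τ k : ℂ) * b k)
      / ((σ k / τ k : ℝ) : ℂ)) atTop (𝓝 (eval (Dvb g') a₀ b₀)) := by
    rw [hg', Dvb_ite]
    exact main_tendsto (Dvb c) (finiteSupp_Dvb hfin)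
      (fun p => Cnd ((expo p).1, (expo p).2 + 1)) ρ τ _ a b a₀ b₀ ha hb hHvb
  refine ⟨hEval, ?_, ?_, ?_⟩
  · -- s₁ = 0
    have hlim : Tendsto (fun k =>
        (eval (Du c) ((ρ k : ℂ) * a k) ((τ k : ℂ) * b k) / ((σ k / ρ k : ℝ) : ℂ)) *
          starRingEnd ℂ (eval (Dvb c) ((ρ k : ℂ) * a k) ((τ k : ℂ) * b k)
            / ((σ k / τ k : ℝ) : ℂ)) -
        starRingEnd ℂ (eval (Dub c) ((ρ k : ℂ) * a k) ((τ k : ℂ) * b k)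
            / ((σ k / ρ k : ℝ) : ℂ)) *
          (eval (Dv c) ((ρ k : ℂ) * a k) ((τ k : ℂ) * b k) / ((σ k / τ k : ℝ) : ℂ)))
        atTop (𝓝 (eval (Du g') a₀ b₀ * starRingEnd ℂ (eval (Dvb g') a₀ b₀) -
          starRingEnd ℂ (eval (Dub g') a₀ b₀) * eval (Dv g') a₀ b₀)) :=
      (hA.mul (tendsto_conj hD)).sub ((tendsto_conj hB).mul hC)
    refine tendsto_nhds_unique (hlim.congr' ?_) tendsto_const_nhds
    filter_upwards with k
    have h := (hcrit k).1
    rw [map_div₀, map_div₀, Complex.conj_ofReal, Complex.conj_ofReal,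
      div_mul_div_comm, div_mul_div_comm, div_sub_div_same, h, zero_div]
  · -- s₂
    have e1 : ∀ k, ‖eval (Du c) ((ρ k : ℂ) * a k) ((τ k : ℂ) * b k)
        / ((σ k / ρ k : ℝ) : ℂ)‖ = ‖eval (Dub c) ((ρ k : ℂ) * a k) ((τ k : ℂ) * b k)
        / ((σ k / ρ k : ℝ) : ℂ)‖ := by
      intro k
      rw [norm_div, norm_div, (hcrit k).2.1]
    exact tendsto_nhds_unique (hA.norm.congr fun k => e1 k) hB.norm
  · have e1 : ∀ k, ‖eval (Dv c) ((ρ k : ℂ) * a k) ((τ k : ℂ) * b k)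
        / ((σ k / τ k : ℝ) : ℂ)‖ = ‖eval (Dvb c) ((ρ k : ℂ) * a k) ((τ k : ℂ) * b k)
        / ((σ k / τ k : ℝ) : ℂ)‖ := by
      intro k
      rw [norm_div, norm_div, (hcrit k).2.2]
    exact tendsto_nhds_unique (hC.norm.congr fun k => e1 k) hD.norm

end WeakIso
namespace WeakIso

open Filter Topology

/-- Face-weight rescaling: limits of rescaled critical zeroes of `c` are critical
zeroes of the face function. -/
lemma face_case (c : MixedCoeff) (hfin : FiniteSupp c) (P : ℕ × ℕ)
    (t : ℕ → ℝ) (ht : ∀ k, 0 < t k) (ht0 : Tendsto t atTop (𝓝 0))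
    (a b : ℕ → ℂ) (a₀ b₀ : ℂ)
    (ha : Tendsto a atTop (𝓝 a₀)) (hb : Tendsto b atTop (𝓝 b₀))
    (u v : ℕ → ℂ)
    (hu : ∀ k, u k = ((t k ^ P.1 : ℝ) : ℂ) * a k)
    (hv : ∀ k, v k = ((t k ^ P.2 : ℝ) : ℂ) * b k)
    (hz : ∀ k, eval c (u k) (v k) = 0)
    (hcrit : ∀ k, Crit c (u k) (v k)) :
    eval (face P c) a₀ b₀ = 0 ∧ Crit (face P c) a₀ b₀ := by
  classical
  have hcore := core c hfin (fun e => ellP P e = dmin P c)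
    (fun k => t k ^ P.1) (fun k => t k ^ P.2) (fun k => t k ^ dmin P c)
    (fun k => pow_pos (ht k) _) (fun k => pow_pos (ht k) _)
    (fun k => pow_pos (ht k) _) a b a₀ b₀ ha hb ?_ ?_ ?_
  · exact hcore
  · intro p hp
    have hle : dmin P c ≤ ellP P (expo p) := dmin_le hp
    have heq : ∀ k, (t k ^ P.1) ^ (expo p).1 * (t k ^ P.2) ^ (expo p).2 / t k ^ dmin P c
        = t k ^ ellP P (expo p) / t k ^ dmin P c := by
      intro k
      rw [← pow_mul, ← pow_mul, ← pow_add]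
      rfl
    by_cases hc : ellP P (expo p) = dmin P c
    · simp only [if_pos hc]
      refine Tendsto.congr (fun k => ?_) tendsto_const_nhds
      rw [heq k, hc, div_self (pow_ne_zero _ (ht k).ne')]
    · simp only [if_neg hc]
      have hlt : dmin P c < ellP P (expo p) := lt_of_le_of_ne hle (Ne.symm hc)
      have heq2 : ∀ k, t k ^ ellP P (expo p) / t k ^ dmin P c
          = t k ^ (ellP P (expo p) - dmin P c) := fun k =>
        (pow_sub₀ _ (ht k).ne' hle).symm
      have hlim := ht0.pow (ellP P (expo p) - dmin P c)
      rw [zero_pow (Nat.sub_ne_zero_of_lt hlt)] at hlim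
      exact hlim.congr fun k => by rw [heq k, heq2 k]
  · intro k
    rw [← hu, ← hv]
    exact hz k
  · intro k
    rw [← hu, ← hv]
    exact hcrit k

/-- Vertex rescaling: limits of rescaled critical zeroes of `c` are critical zeroes
of the vertex face function. -/
lemma vertex_case (c : MixedCoeff) (hfin : FiniteSupp c) (w : ℕ × ℕ)
    (U V : ℕ → ℝ) (hU : ∀ k, 0 < U k) (hV : ∀ k, 0 < V k)
    (a b : ℕ → ℂ) (a₀ b₀ : ℂ)
    (ha : Tendsto a atTop (𝓝 a₀)) (hb : Tendsto b atTop (𝓝 b₀))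
    (u v : ℕ → ℂ)
    (hu : ∀ k, u k = ((U k : ℝ) : ℂ) * a k)
    (hv : ∀ k, v k = ((V k : ℝ) : ℂ) * b k)
    (Hout : ∀ e : ℕ × ℕ, (∃ p, c p ≠ 0 ∧ expo p = e) → e ≠ w →
      Tendsto (fun k => U k ^ e.1 * V k ^ e.2 / (U k ^ w.1 * V k ^ w.2)) atTop (𝓝 0))
    (hz : ∀ k, eval c (u k) (v k) = 0)
    (hcrit : ∀ k, Crit c (u k) (v k)) :
    eval (vertexFace w c) a₀ b₀ = 0 ∧ Crit (vertexFace w c) a₀ b₀ := by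
  classical
  have hcore := core c hfin (fun e => e = w)
    U V (fun k => U k ^ w.1 * V k ^ w.2)
    hU hV (fun k => mul_pos (pow_pos (hU k) _) (pow_pos (hV k) _))
    a b a₀ b₀ ha hb ?_ ?_ ?_
  · exact hcore
  · intro p hp
    by_cases hc : expo p = w
    · simp only [if_pos hc]
      refine Tendsto.congr (fun k => ?_) tendsto_const_nhds
      rw [hc, div_self (mul_pos (pow_pos (hU k) _) (pow_pos (hV k) _)).ne']
    · simp only [if_neg hc]
      exact Hout (expo p) ⟨p, hp, rfl⟩ hc
  · intro k
    rw [← hu, ← hv]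
    exact hz k
  · intro k
    rw [← hu, ← hv]
    exact hcrit k

end WeakIso
namespace WeakIso

open Filter Topology

/-! ### Convex geometry of the Newton boundary -/

lemma weight_eq {P Q : ℕ × ℕ} (hP1 : 0 < P.1) (hPg : Nat.gcd P.1 P.2 = 1)
    (hQ1 : 0 < Q.1) (hQg : Nat.gcd Q.1 Q.2 = 1) (h : P.1 * Q.2 = Q.1 * P.2) :
    P = Q := by
  have hPQ : P.1 ∣ Q.1 := Nat.Coprime.dvd_of_dvd_mul_right hPg ⟨Q.2, h.symm⟩
  have hQP : Q.1 ∣ P.1 := Nat.Coprime.dvd_of_dvd_mul_right hQg ⟨P.2, h⟩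
  have h1 : P.1 = Q.1 := Nat.dvd_antisymm hPQ hQP
  have h2 : P.2 = Q.2 := by
    rw [h1] at h
    exact (Nat.eq_of_mul_eq_mul_left hQ1 h.symm)
  exact Prod.ext h1 h2

/-- Two primitive positive weights for which two fixed distinct exponents are
`ℓ`-equal must coincide. -/
lemma fw_subsingleton (e e' : ℕ × ℕ) (hne : e ≠ e') :
    Set.Subsingleton {P : ℕ × ℕ | 0 < P.1 ∧ 0 < P.2 ∧ Nat.gcd P.1 P.2 = 1 ∧
      ellP P e = ellP P e'} := by
  rintro P ⟨hP1, hP2, hPg, hPe⟩ Q ⟨hQ1, hQ2, hQg, hQe⟩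
  have hPz : (P.1 : ℤ) * e.1 + P.2 * e.2 = P.1 * e'.1 + P.2 * e'.2 := by
    exact_mod_cast hPe
  have hQz : (Q.1 : ℤ) * e.1 + Q.2 * e.2 = Q.1 * e'.1 + Q.2 * e'.2 := by
    exact_mod_cast hQe
  have ha : e.1 ≠ e'.1 := by
    intro h1
    apply hne
    have h2 : (P.2 : ℤ) ≠ 0 := by exact_mod_cast hP2.ne'
    have h3 : (P.2 : ℤ) * e.2 = P.2 * e'.2 := by
      have h4 : ((e.1 : ℤ)) = e'.1 := by exact_mod_cast h1
      rw [h4] at hPz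
      linarith
    have : (e.2 : ℤ) = e'.2 := mul_left_cancel₀ h2 h3
    exact Prod.ext h1 (by exact_mod_cast this)
  have hd : ((e.1 : ℤ) - e'.1) ≠ 0 := by
    intro h0
    exact ha (by exact_mod_cast sub_eq_zero.mp h0)
  have hcross : (P.1 : ℤ) * Q.2 = Q.1 * P.2 := by
    have key : ((P.1 : ℤ) * Q.2 - Q.1 * P.2) * ((e.1 : ℤ) - e'.1) = 0 := by nlinarith
    rcases mul_eq_zero.mp key with h | h
    · linarith
    · exact absurd h hd
  exact weight_eq hP1 hPg hQ1 hQg (by exact_mod_cast hcross)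

lemma fw_finite (c : MixedCoeff) (hfin : FiniteSupp c) :
    {P : ℕ × ℕ | IsFaceWeight c P}.Finite := by
  classical
  set Ec : Finset (ℕ × ℕ) := hfin.toFinset.image expo with hEc
  have hfinSets : ∀ x : (ℕ × ℕ) × (ℕ × ℕ),
      ({P : ℕ × ℕ | 0 < P.1 ∧ 0 < P.2 ∧ Nat.gcd P.1 P.2 = 1 ∧ x.1 ≠ x.2 ∧
        ellP P x.1 = ellP P x.2}).Finite := by
    intro x
    by_cases hx : x.1 = x.2
    · convert Set.finite_empty
      ext P
      simp only [Set.mem_setOf_eq, Set.mem_empty_iff_false, iff_false]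
      rintro ⟨_, _, _, hne, _⟩
      exact hne hx
    · apply Set.Subsingleton.finite
      intro P hP Q hQ
      exact fw_subsingleton x.1 x.2 hx ⟨hP.1, hP.2.1, hP.2.2.1, hP.2.2.2.2⟩
        ⟨hQ.1, hQ.2.1, hQ.2.2.1, hQ.2.2.2.2⟩
  have hsub : {P : ℕ × ℕ | IsFaceWeight c P} ⊆
      ⋃ x ∈ (Ec ×ˢ Ec : Finset _),
        {P : ℕ × ℕ | 0 < P.1 ∧ 0 < P.2 ∧ Nat.gcd P.1 P.2 = 1 ∧ x.1 ≠ x.2 ∧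
          ellP P x.1 = ellP P x.2} := by
    rintro P ⟨hP1, hP2, hPg, p, q, hp, hq, hpq, hpd, hqd⟩
    refine Set.mem_biUnion (show ((expo p, expo q) : (ℕ × ℕ) × (ℕ × ℕ)) ∈
        ((Ec ×ˢ Ec : Finset _) : Set ((ℕ × ℕ) × (ℕ × ℕ))) from ?_) ?_
    · simp only [Finset.coe_product, Set.mem_prod, Finset.mem_coe, hEc,
        Finset.mem_image]
      exact ⟨⟨p, Set.Finite.mem_toFinset _ |>.2 hp, rfl⟩,
        ⟨q, Set.Finite.mem_toFinset _ |>.2 hq, rfl⟩⟩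
    · exact ⟨hP1, hP2, hPg, hpq, by rw [hpd, hqd]⟩
  exact Set.Finite.subset (Set.Finite.biUnion (Ec ×ˢ Ec).finite_toSet (fun x _ => hfinSets x)) hsub

end WeakIso
namespace WeakIso

open Filter Topology

/-- the linear function of the slope associated to an exponent -/
def fsl (τ : ℝ) (e : ℕ × ℕ) : ℝ := τ * e.1 + e.2

lemma fsl_mul (R : ℕ × ℕ) (hR2 : 0 < R.2) (e : ℕ × ℕ) :
    fsl ((R.1 : ℝ) / R.2) e * R.2 = (ellP R e : ℝ) := by
  have h2 : (R.2 : ℝ) ≠ 0 := by exact_mod_cast hR2.ne'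
  unfold fsl ellP
  push_cast
  field_simp

lemma fsl_le_iff (R : ℕ × ℕ) (hR2 : 0 < R.2) (e e' : ℕ × ℕ) :
    fsl ((R.1 : ℝ) / R.2) e ≤ fsl ((R.1 : ℝ) / R.2) e' ↔ ellP R e ≤ ellP R e' := by
  have h2 : (0 : ℝ) < (R.2 : ℝ) := by exact_mod_cast hR2
  rw [← mul_le_mul_iff_of_pos_right h2, fsl_mul R hR2, fsl_mul R hR2, Nat.cast_le]

lemma fsl_eq_iff (R : ℕ × ℕ) (hR2 : 0 < R.2) (e e' : ℕ × ℕ) :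
    fsl ((R.1 : ℝ) / R.2) e = fsl ((R.1 : ℝ) / R.2) e' ↔ ellP R e = ellP R e' := by
  constructor
  · intro h
    exact le_antisymm ((fsl_le_iff R hR2 e e').1 h.le) ((fsl_le_iff R hR2 e' e).1 h.ge)
  · intro h
    exact le_antisymm ((fsl_le_iff R hR2 e e').2 h.le) ((fsl_le_iff R hR2 e' e).2 h.ge)

/-- If the minimum of `fsl τ` over the exponents of `c` is attained at two distinct
exponents, then the primitive weight of slope `τ` is a face weight of `c`. -/
lemma face_weight_of_tie (c : MixedCoeff)
    (w e : ℕ × ℕ) (hw : ∃ p, c p ≠ 0 ∧ expo p = w) (he : ∃ p, c p ≠ 0 ∧ expo p = e)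
    (hne : e ≠ w) (τ : ℝ) (hτpos : 0 < τ)
    (hmin : ∀ e' : ℕ × ℕ, (∃ p, c p ≠ 0 ∧ expo p = e') → fsl τ w ≤ fsl τ e')
    (heq : fsl τ w = fsl τ e) :
    ∃ R : ℕ × ℕ, IsFaceWeight c R ∧ (R.1 : ℝ) / R.2 = τ := by
  classical
  have he1w : e.1 ≠ w.1 := by
    intro h1
    apply hne
    have h2 : (e.2 : ℝ) = w.2 := by
      unfold fsl at heq
      have h4 : ((e.1 : ℝ)) = w.1 := by exact_mod_cast h1
      rw [h4] at heq
      linarith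
    exact Prod.ext h1 (by exact_mod_cast h2)
  -- produce a rational representation of τ
  obtain ⟨a, b, ha, hb, hab⟩ : ∃ a b : ℕ, 0 < a ∧ 0 < b ∧ (a : ℝ) / b = τ := by
    unfold fsl at heq
    rcases lt_or_gt_of_ne he1w with h | h
    · -- e.1 < w.1 : τ * (w.1 - e.1) = e.2 - w.2
      have hr : τ * ((w.1 : ℝ) - e.1) = (e.2 : ℝ) - w.2 := by push_cast; linarith
      have hpos1 : (0 : ℝ) < (w.1 : ℝ) - e.1 := by
        have : (e.1 : ℝ) < w.1 := by exact_mod_cast h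
        linarith
      have hpos2 : (0 : ℝ) < (e.2 : ℝ) - w.2 := by
        have := mul_pos hτpos hpos1
        linarith
      have h22 : w.2 < e.2 := by
        by_contra hcon
        push_neg at hcon
        have : (e.2 : ℝ) ≤ w.2 := by exact_mod_cast hcon
        linarith
      refine ⟨e.2 - w.2, w.1 - e.1, by omega, by omega, ?_⟩
      rw [Nat.cast_sub h22.le, Nat.cast_sub h.le]
      rw [eq_comm, eq_div_iff hpos1.ne']
      linarith
    · have hr : τ * ((e.1 : ℝ) - w.1) = (w.2 : ℝ) - e.2 := by push_cast; linarith
      have hpos1 : (0 : ℝ) < (e.1 : ℝ) - w.1 := by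
        have : (w.1 : ℝ) < e.1 := by exact_mod_cast h
        linarith
      have hpos2 : (0 : ℝ) < (w.2 : ℝ) - e.2 := by
        have := mul_pos hτpos hpos1
        linarith
      have h22 : e.2 < w.2 := by
        by_contra hcon
        push_neg at hcon
        have : (w.2 : ℝ) ≤ e.2 := by exact_mod_cast hcon
        linarith
      refine ⟨w.2 - e.2, e.1 - w.1, by omega, by omega, ?_⟩
      rw [Nat.cast_sub h22.le, Nat.cast_sub h.le]
      rw [eq_comm, eq_div_iff hpos1.ne']
      linarith
  -- make it primitive
  set d := Nat.gcd a b with hd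
  have hdpos : 0 < d := Nat.gcd_pos_of_pos_left b ha
  set R : ℕ × ℕ := (a / d, b / d) with hR
  have hR1 : 0 < R.1 := Nat.div_pos (Nat.le_of_dvd ha (Nat.gcd_dvd_left a b)) hdpos
  have hR2 : 0 < R.2 := Nat.div_pos (Nat.le_of_dvd hb (Nat.gcd_dvd_right a b)) hdpos
  have hRg : Nat.gcd R.1 R.2 = 1 := Nat.coprime_div_gcd_div_gcd hdpos
  have hRsl : (R.1 : ℝ) / R.2 = τ := by
    have e1 : R.1 * d = a := Nat.div_mul_cancel (Nat.gcd_dvd_left a b)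
    have e2 : R.2 * d = b := Nat.div_mul_cancel (Nat.gcd_dvd_right a b)
    rw [← hab, ← e1, ← e2]
    push_cast
    rw [mul_div_mul_right _ _ (by exact_mod_cast hdpos.ne')]
  -- R is a face weight
  obtain ⟨pw, hpw, hpwe⟩ := hw
  obtain ⟨pe, hpe, hpee⟩ := he
  have hminR : ∀ e' : ℕ × ℕ, (∃ p, c p ≠ 0 ∧ expo p = e') → ellP R w ≤ ellP R e' := by
    intro e' he'
    exact (fsl_le_iff R hR2 w e').1 (by rw [hRsl]; exact hmin e' he')
  have hdw : ellP R w = dmin R c := by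
    obtain ⟨p', hp', hd'⟩ := dmin_attained R hpw
    exact le_antisymm (hd' ▸ hminR (expo p') ⟨p', hp', rfl⟩) (hpwe ▸ dmin_le hpw)
  have hde : ellP R e = dmin R c := by
    rw [← hdw]
    exact ((fsl_eq_iff R hR2 w e).1 (by rw [hRsl]; exact heq)).symm
  refine ⟨R, ⟨hR1, hR2, hRg, pw, pe, hpw, hpe, ?_, by rw [hpwe]; exact hdw,
    by rw [hpee]; exact hde⟩, hRsl⟩
  rw [hpwe, hpee]
  exact fun hcon => hne hcon.symm

/-- Distinct slopes and common minimality force equality of exponents. -/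
lemma unique_min {P Q w e : ℕ × ℕ} (hP2 : 0 < P.2)
    (hslope : Q.1 * P.2 < P.1 * Q.2)
    (h1 : ellP P e = ellP P w) (h2 : ellP Q e = ellP Q w) : e = w := by
  have hPz : (P.1 : ℤ) * e.1 + P.2 * e.2 = P.1 * w.1 + P.2 * w.2 := by exact_mod_cast h1
  have hQz : (Q.1 : ℤ) * e.1 + Q.2 * e.2 = Q.1 * w.1 + Q.2 * w.2 := by exact_mod_cast h2
  have hsz : (Q.1 : ℤ) * P.2 < P.1 * Q.2 := by exact_mod_cast hslope
  have key : ((P.1 : ℤ) * Q.2 - Q.1 * P.2) * ((e.1 : ℤ) - w.1) = 0 := by nlinarith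
  have h3 : (e.1 : ℤ) = w.1 := by
    rcases mul_eq_zero.mp key with h | h
    · linarith
    · linarith [sub_eq_zero.mp h]
  have he1 : e.1 = w.1 := by exact_mod_cast h3
  have h4 : (P.2 : ℤ) * e.2 = P.2 * w.2 := by rw [h3] at hPz; linarith
  have he2 : e.2 = w.2 := by
    have : (e.2 : ℤ) = w.2 := mul_left_cancel₀ (by exact_mod_cast hP2.ne') h4
    exact_mod_cast this
  exact Prod.ext he1 he2

end WeakIso
namespace WeakIso

open Filter Topology

/-- Between two slope-adjacent compact 1-faces of the Newton boundary there is a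
common vertex, which is the unique common minimizer of the two linear forms. -/
lemma common_vertex (c : MixedCoeff) (hfin : FiniteSupp c)
    {P Q : ℕ × ℕ} (hP : IsFaceWeight c P) (hQ : IsFaceWeight c Q)
    (hslope : Q.1 * P.2 < P.1 * Q.2)
    (hbetween : ∀ R, IsFaceWeight c R →
      ¬(R.1 * P.2 < P.1 * R.2 ∧ Q.1 * R.2 < R.1 * Q.2)) :
    ∃ w : ℕ × ℕ, (∃ p, c p ≠ 0 ∧ expo p = w) ∧ ellP P w = dmin P c ∧
      ellP Q w = dmin Q c ∧
      ∀ e : ℕ × ℕ, (∃ p, c p ≠ 0 ∧ expo p = e) → e ≠ w →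
        ¬(ellP P e = dmin P c ∧ ellP Q e = dmin Q c) := by
  classical
  obtain ⟨hP1, hP2, hPg, p₀, q₀, hp₀, hq₀, hpq₀, hpd₀, hqd₀⟩ := hP
  obtain ⟨hQ1, hQ2, hQg, p₁, q₁, hp₁, hq₁, hpq₁, hpd₁, hqd₁⟩ := hQ
  set Ec : Finset (ℕ × ℕ) := hfin.toFinset.image expo with hEc
  have hmemEc : ∀ e : ℕ × ℕ, e ∈ Ec ↔ ∃ p, c p ≠ 0 ∧ expo p = e := by
    intro e
    simp only [hEc, Finset.mem_image, Set.Finite.mem_toFinset, Function.mem_support]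
    exact ⟨fun ⟨a, ha, h⟩ => ⟨a, (Set.Finite.mem_toFinset _).1 ha, h⟩,
      fun ⟨a, ha, h⟩ => ⟨a, (Set.Finite.mem_toFinset _).2 ha, h⟩⟩
  have hdminP : ∀ e ∈ Ec, dmin P c ≤ ellP P e := by
    intro e he
    obtain ⟨p, hp, rfl⟩ := (hmemEc e).1 he
    exact dmin_le hp
  have hdminQ : ∀ e ∈ Ec, dmin Q c ≤ ellP Q e := by
    intro e he
    obtain ⟨p, hp, rfl⟩ := (hmemEc e).1 he
    exact dmin_le hp
  -- the rightmost vertex of the face of P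
  set M : Finset (ℕ × ℕ) := Ec.filter (fun e => ellP P e = dmin P c) with hM
  have hMne : M.Nonempty :=
    ⟨expo p₀, Finset.mem_filter.2 ⟨(hmemEc _).2 ⟨p₀, hp₀, rfl⟩, hpd₀⟩⟩
  obtain ⟨w, hwM, hwmax⟩ := Finset.exists_max_image M (fun e => e.1) hMne
  obtain ⟨hwEc, hwdmin⟩ := Finset.mem_filter.1 hwM
  set σP : ℝ := (P.1 : ℝ) / P.2 with hσP
  set σQ : ℝ := (Q.1 : ℝ) / Q.2 with hσQ
  have hP2R : (0 : ℝ) < (P.2 : ℝ) := by exact_mod_cast hP2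
  have hQ2R : (0 : ℝ) < (Q.2 : ℝ) := by exact_mod_cast hQ2
  have hσQP : σQ < σP := by
    rw [hσQ, hσP, div_lt_div_iff₀ hQ2R hP2R]
    exact_mod_cast hslope
  have hσQ0 : 0 < σQ := div_pos (by exact_mod_cast hQ1) hQ2R
  set T : Set ℝ := {τ : ℝ | σQ ≤ τ ∧ τ ≤ σP ∧ ∀ e ∈ Ec, fsl τ w ≤ fsl τ e} with hT
  have hσPT : σP ∈ T := by
    refine ⟨hσQP.le, le_refl _, fun e he => ?_⟩
    rw [hσP]
    exact (fsl_le_iff P hP2 w e).2 (hwdmin ▸ hdminP e he)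
  have hTclosed : IsClosed T := by
    have : T = Set.Icc σQ σP ∩ ⋂ e ∈ (Ec : Set (ℕ × ℕ)), {τ : ℝ | fsl τ w ≤ fsl τ e} := by
      ext τ
      simp only [hT, Set.mem_setOf_eq, Set.mem_inter_iff, Set.mem_Icc, Set.mem_iInter,
        Finset.mem_coe]
      tauto
    rw [this]
    refine isClosed_Icc.inter (isClosed_biInter fun e _ => isClosed_le ?_ ?_)
    · exact (continuous_id.mul continuous_const).add continuous_const
    · exact (continuous_id.mul continuous_const).add continuous_const
  have hbdd : BddBelow T := ⟨σQ, fun τ hτ => hτ.1⟩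
  set τs : ℝ := sInf T with hτs
  have hτsT : τs ∈ T := hTclosed.csInf_mem ⟨σP, hσPT⟩ hbdd
  have hkey : τs = σQ := by
    by_contra hne'
    have hQlt : σQ < τs := lt_of_le_of_ne hτsT.1 (Ne.symm hne')
    have hτpos : 0 < τs := lt_trans hσQ0 hQlt
    -- classification of ties
    have hclass : ∀ e ∈ Ec, fsl τs w = fsl τs e → e.1 ≤ w.1 := by
      intro e he heq
      by_cases hew : e = w
      · rw [hew]
      by_cases hPs : τs = σP
      · have h1 : ellP P e = dmin P c := by
          rw [← hwdmin]
          exact ((fsl_eq_iff P hP2 w e).1 (by rw [← hσP, ← hPs]; exact heq)).symm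
        exact hwmax e (Finset.mem_filter.2 ⟨he, h1⟩)
      · exfalso
        have hτltP : τs < σP := lt_of_le_of_ne hτsT.2.1 hPs
        obtain ⟨R, hRfw, hRsl⟩ := face_weight_of_tie c w e ((hmemEc w).1 hwEc)
          ((hmemEc e).1 he) hew τs hτpos
          (fun e' he' => hτsT.2.2 e' ((hmemEc e').2 he')) heq
        have hR2R : (0 : ℝ) < (R.2 : ℝ) := by exact_mod_cast hRfw.2.1
        refine hbetween R hRfw ⟨?_, ?_⟩
        · have : (R.1 : ℝ) / R.2 < σP := hRsl ▸ hτltP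
          rw [hσP, div_lt_div_iff₀ hR2R hP2R] at this
          exact_mod_cast this
        · have : σQ < (R.1 : ℝ) / R.2 := hRsl ▸ hQlt
          rw [hσQ, div_lt_div_iff₀ hQ2R hR2R] at this
          exact_mod_cast this
    -- construct a smaller element of T
    set S : Finset (ℕ × ℕ) := Ec.filter (fun e => fsl τs w ≠ fsl τs e ∧ w.1 < e.1) with hS
    set L : Finset ℝ := insert σQ (S.image (fun e => ((w.2 : ℝ) - e.2) / ((e.1 : ℝ) - w.1)))
      with hL
    have hLne : L.Nonempty := ⟨σQ, Finset.mem_insert_self _ _⟩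
    set τ₀ : ℝ := L.max' hLne with hτ₀
    have hroots : ∀ e ∈ S, ((w.2 : ℝ) - e.2) / ((e.1 : ℝ) - w.1) < τs := by
      intro e heS
      obtain ⟨heEc, hne2, h1⟩ := Finset.mem_filter.1 heS
      have hpos : (0 : ℝ) < (e.1 : ℝ) - w.1 := by
        have : (w.1 : ℝ) < e.1 := by exact_mod_cast h1
        linarith
      have hstrict : fsl τs w < fsl τs e := lt_of_le_of_ne (hτsT.2.2 e heEc) hne2
      rw [div_lt_iff₀ hpos]
      unfold fsl at hstrict
      nlinarith
    have hτ₀lt : τ₀ < τs := by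
      rw [hτ₀]
      rw [Finset.max'_lt_iff]
      intro y hy
      rcases Finset.mem_insert.1 hy with h | h
      · rw [h]; exact hQlt
      · obtain ⟨e, heS, rfl⟩ := Finset.mem_image.1 h
        exact hroots e heS
    have hτ₀T : τ₀ ∈ T := by
      refine ⟨Finset.le_max' _ _ (Finset.mem_insert_self _ _), le_trans hτ₀lt.le hτsT.2.1, ?_⟩
      intro e he
      by_cases htie : fsl τs w = fsl τs e
      · have h1 : e.1 ≤ w.1 := hclass e he htie
        have h1R : (e.1 : ℝ) ≤ w.1 := by exact_mod_cast h1
        unfold fsl at htie ⊢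
        nlinarith
      · have hstrict : fsl τs w < fsl τs e := lt_of_le_of_ne (hτsT.2.2 e he) htie
        by_cases h1 : e.1 ≤ w.1
        · have h1R : (e.1 : ℝ) ≤ w.1 := by exact_mod_cast h1
          unfold fsl at hstrict ⊢
          nlinarith
        · push_neg at h1
          have heS : e ∈ S := Finset.mem_filter.2 ⟨he, htie, h1⟩
          have hroot : ((w.2 : ℝ) - e.2) / ((e.1 : ℝ) - w.1) ≤ τ₀ := by
            apply Finset.le_max'
            exact Finset.mem_insert_of_mem (Finset.mem_image_of_mem _ heS)
          have hpos : (0 : ℝ) < (e.1 : ℝ) - w.1 := by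
            have : (w.1 : ℝ) < e.1 := by exact_mod_cast h1
            linarith
          rw [div_le_iff₀ hpos] at hroot
          unfold fsl
          nlinarith
    exact absurd (csInf_le hbdd hτ₀T) (not_le.2 hτ₀lt)
  -- at σQ : w also minimizes ℓ_Q
  have hQw : ellP Q w = dmin Q c := by
    have hminQ : ∀ e ∈ Ec, fsl σQ w ≤ fsl σQ e := by
      have := hτsT.2.2
      rwa [hkey] at this
    obtain ⟨p', hp', hd'⟩ := dmin_attained Q hp₀
    refine le_antisymm ?_ (hdminQ w hwEc)
    calc ellP Q w ≤ ellP Q (expo p') := by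
          rw [hσQ] at hminQ
          exact (fsl_le_iff Q hQ2 w (expo p')).1
            (hminQ (expo p') ((hmemEc _).2 ⟨p', hp', rfl⟩))
      _ = dmin Q c := hd'
  refine ⟨w, (hmemEc w).1 hwEc, hwdmin, hQw, ?_⟩
  rintro e hee hne ⟨h1, h2⟩
  exact hne (unique_min hP2 hslope (h1.trans hwdmin.symm) (h2.trans hQw.symm))

end WeakIso
namespace WeakIso

open Filter Topology

/-- `v`-normalized face-case worker: from a sequence of critical zeroes of `c`
with `‖u‖^{P.2}/‖v‖^{P.1}` bounded, produce a critical zero of the face with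
`‖b₀‖ = 1` and a lower bound on `‖a₀‖`. -/
lemma face_contra_v (c : MixedCoeff) (hfin : FiniteSupp c) (P : ℕ × ℕ)
    (hP1 : 0 < P.1) (hP2 : 0 < P.2)
    (u v : ℕ → ℂ) (hv0 : ∀ k, v k ≠ 0)
    (hz : ∀ k, eval c (u k) (v k) = 0) (hcr : ∀ k, Crit c (u k) (v k))
    (hvlim : Tendsto v atTop (𝓝 0))
    (C₀ C : ℝ) (hlow : ∀ k, C₀ ≤ ‖u k‖ ^ P.2 / ‖v k‖ ^ P.1)
    (hbound : ∀ k, ‖u k‖ ^ P.2 / ‖v k‖ ^ P.1 ≤ C) :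
    ∃ a₀ b₀ : ℂ, ‖b₀‖ = 1 ∧ C₀ ≤ ‖a₀‖ ^ P.2 ∧
      eval (face P c) a₀ b₀ = 0 ∧ Crit (face P c) a₀ b₀ := by
  classical
  set t : ℕ → ℝ := fun k => ‖v k‖ ^ ((P.2 : ℝ)⁻¹) with hts
  have hvpos : ∀ k, 0 < ‖v k‖ := fun k => norm_pos_iff.2 (hv0 k)
  have ht : ∀ k, 0 < t k := fun k => Real.rpow_pos_of_pos (hvpos k) _
  have htP2 : ∀ k, t k ^ P.2 = ‖v k‖ := fun k =>
    Real.rpow_inv_natCast_pow (hvpos k).le hP2.ne'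
  have ht0 : Tendsto t atTop (𝓝 0) := by
    have hcont := Real.continuousAt_rpow_const 0 ((P.2 : ℝ)⁻¹)
      (Or.inr (by positivity))
    have h0 : (0 : ℝ) ^ ((P.2 : ℝ)⁻¹) = 0 :=
      Real.zero_rpow (by positivity)
    have h1 := hvlim.norm
    rw [norm_zero] at h1
    have := hcont.tendsto.comp h1
    rwa [h0] at this
  set a : ℕ → ℂ := fun k => u k / ((t k ^ P.1 : ℝ) : ℂ) with has
  set b : ℕ → ℂ := fun k => v k / ((t k ^ P.2 : ℝ) : ℂ) with hbs
  have hbnorm : ∀ k, ‖b k‖ = 1 := by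
    intro k
    rw [hbs]
    simp only [norm_div, Complex.norm_real, Real.norm_eq_abs]
    rw [htP2 k, abs_of_pos (hvpos k), div_self (hvpos k).ne']
  have hanorm : ∀ k, ‖a k‖ ^ P.2 = ‖u k‖ ^ P.2 / ‖v k‖ ^ P.1 := by
    intro k
    rw [has]
    simp only [norm_div, Complex.norm_real, Real.norm_eq_abs]
    rw [abs_of_pos (pow_pos (ht k) _), div_pow, ← pow_mul, mul_comm P.1 P.2, pow_mul,
      htP2 k]
  have habound : ∀ k, ‖a k‖ ≤ max C 1 := by
    intro k
    by_contra hcon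
    push_neg at hcon
    have h1 : (1 : ℝ) ≤ ‖a k‖ := le_trans (le_max_right C 1) hcon.le
    have h2 : ‖a k‖ ≤ ‖a k‖ ^ P.2 := le_self_pow₀ h1 hP2.ne'
    have h3 : ‖a k‖ ^ P.2 ≤ C := (hanorm k) ▸ hbound k
    have := le_trans h2 h3
    have := lt_of_le_of_lt (le_trans this (le_max_left C 1)) hcon
    exact lt_irrefl _ this
  -- Bolzano–Weierstrass
  obtain ⟨a₀, -, φ₁, hφ₁, ha₀⟩ :=
    (isCompact_closedBall (0 : ℂ) (max C 1)).tendsto_subseq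
      (x := a) (fun k => by
        simp only [Metric.mem_closedBall, dist_zero_right]; exact habound k)
  obtain ⟨b₀, hb₀mem, φ₂, hφ₂, hb₀⟩ :=
    (isCompact_sphere (0 : ℂ) 1).tendsto_subseq (x := b ∘ φ₁) (fun k => by
      simp only [Function.comp_apply, mem_sphere_iff_norm, sub_zero]
      exact hbnorm _)
  set ψ : ℕ → ℕ := φ₁ ∘ φ₂ with hψ
  have hψmono : StrictMono ψ := hφ₁.comp hφ₂
  have haψ : Tendsto (a ∘ ψ) atTop (𝓝 a₀) := ha₀.comp hφ₂.tendsto_atTop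
  have hmain := face_case c hfin P (t ∘ ψ) (fun k => ht _)
    (ht0.comp hψmono.tendsto_atTop) (a ∘ ψ) (b ∘ ψ) a₀ b₀ haψ hb₀
    (u ∘ ψ) (v ∘ ψ)
    (fun k => by
      have hx : ((t (ψ k) ^ P.1 : ℝ) : ℂ) ≠ 0 := by
        simp only [ne_eq, Complex.ofReal_eq_zero]
        exact (pow_pos (ht _) _).ne'
      simp only [Function.comp_apply, has]
      field_simp)
    (fun k => by
      have hx : ((t (ψ k) ^ P.2 : ℝ) : ℂ) ≠ 0 := by
        simp only [ne_eq, Complex.ofReal_eq_zero]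
        exact (pow_pos (ht _) _).ne'
      simp only [Function.comp_apply, hbs]
      field_simp)
    (fun k => hz _) (fun k => hcr _)
  refine ⟨a₀, b₀, by simpa [mem_sphere_iff_norm, sub_zero] using hb₀mem, ?_,
    hmain.1, hmain.2⟩
  -- lower bound on the limit
  have hlim2 : Tendsto (fun k => ‖a (ψ k)‖ ^ P.2) atTop (𝓝 (‖a₀‖ ^ P.2)) :=
    (haψ.norm).pow P.2
  refine ge_of_tendsto hlim2 ?_
  filter_upwards with k
  rw [hanorm (ψ k)]
  exact hlow _

/-- `u`-normalized face-case worker. -/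
lemma face_contra_u (c : MixedCoeff) (hfin : FiniteSupp c) (P : ℕ × ℕ)
    (hP1 : 0 < P.1) (hP2 : 0 < P.2)
    (u v : ℕ → ℂ) (hu0 : ∀ k, u k ≠ 0)
    (hz : ∀ k, eval c (u k) (v k) = 0) (hcr : ∀ k, Crit c (u k) (v k))
    (hulim : Tendsto u atTop (𝓝 0))
    (C : ℝ) (hbound : ∀ k, ‖v k‖ ^ P.1 / ‖u k‖ ^ P.2 ≤ C) :
    ∃ a₀ b₀ : ℂ, ‖a₀‖ = 1 ∧
      eval (face P c) a₀ b₀ = 0 ∧ Crit (face P c) a₀ b₀ := by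
  classical
  set t : ℕ → ℝ := fun k => ‖u k‖ ^ ((P.1 : ℝ)⁻¹) with hts
  have hupos : ∀ k, 0 < ‖u k‖ := fun k => norm_pos_iff.2 (hu0 k)
  have ht : ∀ k, 0 < t k := fun k => Real.rpow_pos_of_pos (hupos k) _
  have htP1 : ∀ k, t k ^ P.1 = ‖u k‖ := fun k =>
    Real.rpow_inv_natCast_pow (hupos k).le hP1.ne'
  have ht0 : Tendsto t atTop (𝓝 0) := by
    have hcont := Real.continuousAt_rpow_const 0 ((P.1 : ℝ)⁻¹)
      (Or.inr (by positivity))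
    have h0 : (0 : ℝ) ^ ((P.1 : ℝ)⁻¹) = 0 :=
      Real.zero_rpow (by positivity)
    have h1 := hulim.norm
    rw [norm_zero] at h1
    have := hcont.tendsto.comp h1
    rwa [h0] at this
  set a : ℕ → ℂ := fun k => u k / ((t k ^ P.1 : ℝ) : ℂ) with has
  set b : ℕ → ℂ := fun k => v k / ((t k ^ P.2 : ℝ) : ℂ) with hbs
  have hanorm : ∀ k, ‖a k‖ = 1 := by
    intro k
    rw [has]
    simp only [norm_div, Complex.norm_real, Real.norm_eq_abs]
    rw [htP1 k, abs_of_pos (hupos k), div_self (hupos k).ne']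
  have hbnorm : ∀ k, ‖b k‖ ^ P.1 = ‖v k‖ ^ P.1 / ‖u k‖ ^ P.2 := by
    intro k
    rw [hbs]
    simp only [norm_div, Complex.norm_real, Real.norm_eq_abs]
    rw [abs_of_pos (pow_pos (ht k) _), div_pow, ← pow_mul, mul_comm P.2 P.1, pow_mul,
      htP1 k]
  have hbbound : ∀ k, ‖b k‖ ≤ max C 1 := by
    intro k
    by_contra hcon
    push_neg at hcon
    have h1 : (1 : ℝ) ≤ ‖b k‖ := le_trans (le_max_right C 1) hcon.le
    have h2 : ‖b k‖ ≤ ‖b k‖ ^ P.1 := le_self_pow₀ h1 hP1.ne'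
    have h3 : ‖b k‖ ^ P.1 ≤ C := (hbnorm k) ▸ hbound k
    have := lt_of_le_of_lt (le_trans (le_trans h2 h3) (le_max_left C 1)) hcon
    exact lt_irrefl _ this
  obtain ⟨b₀, -, φ₁, hφ₁, hb₀⟩ :=
    (isCompact_closedBall (0 : ℂ) (max C 1)).tendsto_subseq
      (x := b) (fun k => by
        simp only [Metric.mem_closedBall, dist_zero_right]; exact hbbound k)
  obtain ⟨a₀, ha₀mem, φ₂, hφ₂, ha₀⟩ :=
    (isCompact_sphere (0 : ℂ) 1).tendsto_subseq (x := a ∘ φ₁) (fun k => by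
      simp only [Function.comp_apply, mem_sphere_iff_norm, sub_zero]
      exact hanorm _)
  set ψ : ℕ → ℕ := φ₁ ∘ φ₂ with hψ
  have hψmono : StrictMono ψ := hφ₁.comp hφ₂
  have hbψ : Tendsto (b ∘ ψ) atTop (𝓝 b₀) := hb₀.comp hφ₂.tendsto_atTop
  have hmain := face_case c hfin P (t ∘ ψ) (fun k => ht _)
    (ht0.comp hψmono.tendsto_atTop) (a ∘ ψ) (b ∘ ψ) a₀ b₀ ha₀ hbψ
    (u ∘ ψ) (v ∘ ψ)
    (fun k => by
      have hx : ((t (ψ k) ^ P.1 : ℝ) : ℂ) ≠ 0 := by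
        simp only [ne_eq, Complex.ofReal_eq_zero]
        exact (pow_pos (ht _) _).ne'
      simp only [Function.comp_apply, has]
      field_simp)
    (fun k => by
      have hx : ((t (ψ k) ^ P.2 : ℝ) : ℂ) ≠ 0 := by
        simp only [ne_eq, Complex.ofReal_eq_zero]
        exact (pow_pos (ht _) _).ne'
      simp only [Function.comp_apply, hbs]
      field_simp)
    (fun k => hz _) (fun k => hcr _)
  exact ⟨a₀, b₀, by simpa [mem_sphere_iff_norm, sub_zero] using ha₀mem,
    hmain.1, hmain.2⟩

end WeakIso
namespace WeakIso

open Filter Topology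

/-- Decomposition of a two-variable monomial ratio along two weight directions. -/
lemma ratio_decomp (U V : ℝ) (hU : 0 < U) (hV : 0 < V) (P Q : ℕ × ℕ)
    (hD : Q.1 * P.2 < P.1 * Q.2)
    (e w : ℕ × ℕ) (m n : ℕ)
    (hm : ellP P e = ellP P w + m) (hn : ellP Q e = ellP Q w + n) :
    U ^ e.1 * V ^ e.2 / (U ^ w.1 * V ^ w.2)
      = ((U ^ Q.2 / V ^ Q.1) ^ (((P.1 * Q.2 - Q.1 * P.2 : ℕ) : ℝ)⁻¹)) ^ m
        * ((V ^ P.1 / U ^ P.2) ^ (((P.1 * Q.2 - Q.1 * P.2 : ℕ) : ℝ)⁻¹)) ^ n := by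
  have hDR : ((P.1 * Q.2 - Q.1 * P.2 : ℕ) : ℝ) = (P.1 : ℝ) * Q.2 - (Q.1 : ℝ) * P.2 := by
    rw [Nat.cast_sub hD.le]
    push_cast
    ring
  have hDpos : (0 : ℝ) < ((P.1 * Q.2 - Q.1 * P.2 : ℕ) : ℝ) := by
    rw [hDR]
    have : (Q.1 : ℝ) * P.2 < (P.1 : ℝ) * Q.2 := by exact_mod_cast hD
    linarith
  have hX : (0 : ℝ) < U ^ Q.2 / V ^ Q.1 := by positivity
  have hY : (0 : ℝ) < V ^ P.1 / U ^ P.2 := by positivity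
  have hL : (0 : ℝ) < U ^ e.1 * V ^ e.2 / (U ^ w.1 * V ^ w.2) := by positivity
  have hR : (0 : ℝ) < ((U ^ Q.2 / V ^ Q.1) ^ (((P.1 * Q.2 - Q.1 * P.2 : ℕ) : ℝ)⁻¹)) ^ m
      * ((V ^ P.1 / U ^ P.2) ^ (((P.1 * Q.2 - Q.1 * P.2 : ℕ) : ℝ)⁻¹)) ^ n := by
    have := Real.rpow_pos_of_pos hX (((P.1 * Q.2 - Q.1 * P.2 : ℕ) : ℝ)⁻¹)
    have := Real.rpow_pos_of_pos hY (((P.1 * Q.2 - Q.1 * P.2 : ℕ) : ℝ)⁻¹)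
    positivity
  rw [← Real.exp_log hL, ← Real.exp_log hR]
  congr 1
  rw [Real.log_div (by positivity) (by positivity), Real.log_mul (by positivity)
    (by positivity), Real.log_mul (by positivity) (by positivity),
    Real.log_mul (by positivity) (by positivity), Real.log_pow, Real.log_pow,
    Real.log_pow, Real.log_pow, Real.log_pow, Real.log_pow,
    Real.log_rpow hX, Real.log_rpow hY,
    Real.log_div (by positivity) (by positivity),
    Real.log_div (by positivity) (by positivity), Real.log_pow, Real.log_pow,
    Real.log_pow, Real.log_pow]
  have hmR : (P.1 : ℝ) * e.1 + (P.2 : ℝ) * e.2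
      = (P.1 : ℝ) * w.1 + (P.2 : ℝ) * w.2 + m := by exact_mod_cast hm
  have hnR : (Q.1 : ℝ) * e.1 + (Q.2 : ℝ) * e.2
      = (Q.1 : ℝ) * w.1 + (Q.2 : ℝ) * w.2 + n := by exact_mod_cast hn
  rw [hDR]
  have hDne : (P.1 : ℝ) * Q.2 - (Q.1 : ℝ) * P.2 ≠ 0 := by
    rw [← hDR]; exact hDpos.ne'
  field_simp
  linear_combination (Real.log U * (Q.2 : ℝ) - Real.log V * (Q.1 : ℝ)) * hmR
    + (Real.log V * (P.1 : ℝ) - Real.log U * (P.2 : ℝ)) * hnR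

/-- Vertex-case worker: unit-normalize both coordinates and pass to the limit. -/
lemma vertex_contra (c : MixedCoeff) (hfin : FiniteSupp c) (w : ℕ × ℕ)
    (u v : ℕ → ℂ) (hu0 : ∀ k, u k ≠ 0) (hv0 : ∀ k, v k ≠ 0)
    (hz : ∀ k, eval c (u k) (v k) = 0) (hcr : ∀ k, Crit c (u k) (v k))
    (Hout : ∀ e : ℕ × ℕ, (∃ p, c p ≠ 0 ∧ expo p = e) → e ≠ w →
      Tendsto (fun k => ‖u k‖ ^ e.1 * ‖v k‖ ^ e.2 / (‖u k‖ ^ w.1 * ‖v k‖ ^ w.2))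
        atTop (𝓝 0)) :
    ∃ a₀ b₀ : ℂ, ‖a₀‖ = 1 ∧ ‖b₀‖ = 1 ∧
      eval (vertexFace w c) a₀ b₀ = 0 ∧ Crit (vertexFace w c) a₀ b₀ := by
  classical
  set a : ℕ → ℂ := fun k => u k / (‖u k‖ : ℂ) with has
  set b : ℕ → ℂ := fun k => v k / (‖v k‖ : ℂ) with hbs
  have hupos : ∀ k, 0 < ‖u k‖ := fun k => norm_pos_iff.2 (hu0 k)
  have hvpos : ∀ k, 0 < ‖v k‖ := fun k => norm_pos_iff.2 (hv0 k)
  have hanorm : ∀ k, ‖a k‖ = 1 := by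
    intro k
    rw [has]
    simp only [norm_div, Complex.norm_real, Real.norm_eq_abs]
    rw [abs_of_pos (hupos k), div_self (hupos k).ne']
  have hbnorm : ∀ k, ‖b k‖ = 1 := by
    intro k
    rw [hbs]
    simp only [norm_div, Complex.norm_real, Real.norm_eq_abs]
    rw [abs_of_pos (hvpos k), div_self (hvpos k).ne']
  obtain ⟨a₀, ha₀mem, φ₁, hφ₁, ha₀⟩ :=
    (isCompact_sphere (0 : ℂ) 1).tendsto_subseq (x := a) (fun k => by
      simp only [mem_sphere_iff_norm, sub_zero]; exact hanorm k)
  obtain ⟨b₀, hb₀mem, φ₂, hφ₂, hb₀⟩ :=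
    (isCompact_sphere (0 : ℂ) 1).tendsto_subseq (x := b ∘ φ₁) (fun k => by
      simp only [Function.comp_apply, mem_sphere_iff_norm, sub_zero]
      exact hbnorm _)
  set ψ : ℕ → ℕ := φ₁ ∘ φ₂ with hψ
  have hψmono : StrictMono ψ := hφ₁.comp hφ₂
  have haψ : Tendsto (a ∘ ψ) atTop (𝓝 a₀) := ha₀.comp hφ₂.tendsto_atTop
  have hmain := vertex_case c hfin w (fun k => ‖u (ψ k)‖) (fun k => ‖v (ψ k)‖)
    (fun k => hupos _) (fun k => hvpos _) (a ∘ ψ) (b ∘ ψ) a₀ b₀ haψ hb₀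
    (u ∘ ψ) (v ∘ ψ)
    (fun k => by
      simp only [Function.comp_apply, has]
      rw [mul_div_cancel₀]
      simp only [ne_eq, Complex.ofReal_eq_zero]
      exact (hupos _).ne')
    (fun k => by
      simp only [Function.comp_apply, hbs]
      rw [mul_div_cancel₀]
      simp only [ne_eq, Complex.ofReal_eq_zero]
      exact (hvpos _).ne')
    (fun e he hne => (Hout e he hne).comp hψmono.tendsto_atTop)
    (fun k => hz _) (fun k => hcr _)
  exact ⟨a₀, b₀, by simpa [mem_sphere_iff_norm, sub_zero] using ha₀mem,
    by simpa [mem_sphere_iff_norm, sub_zero] using hb₀mem, hmain.1, hmain.2⟩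

end WeakIso
namespace WeakIso

open Filter Topology

/-- slope of a weight -/
noncomputable def sl (R : ℕ × ℕ) : ℝ := (R.1 : ℝ) / R.2

lemma sl_le_iff {P Q : ℕ × ℕ} (hP2 : 0 < P.2) (hQ2 : 0 < Q.2) :
    sl Q ≤ sl P ↔ Q.1 * P.2 ≤ P.1 * Q.2 := by
  unfold sl
  rw [div_le_div_iff₀ (by exact_mod_cast hQ2) (by exact_mod_cast hP2)]
  constructor
  · intro h; exact_mod_cast h
  · intro h; exact_mod_cast h

lemma sl_lt_iff {P Q : ℕ × ℕ} (hP2 : 0 < P.2) (hQ2 : 0 < Q.2) :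
    sl Q < sl P ↔ Q.1 * P.2 < P.1 * Q.2 := by
  unfold sl
  rw [div_lt_div_iff₀ (by exact_mod_cast hQ2) (by exact_mod_cast hP2)]
  constructor
  · intro h; exact_mod_cast h
  · intro h; exact_mod_cast h

lemma exists_steepest (c : MixedCoeff) (hfin : FiniteSupp c)
    (hN : ∃ P, IsFaceWeight c P) : ∃ P, IsSteepest c P := by
  classical
  set F : Finset (ℕ × ℕ) := (fw_finite c hfin).toFinset with hF
  have hmem : ∀ R, R ∈ F ↔ IsFaceWeight c R := fun R => Set.Finite.mem_toFinset _
  obtain ⟨P₀, hP₀⟩ := hN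
  obtain ⟨P, hPF, hmax⟩ := Finset.exists_max_image F sl ⟨P₀, (hmem P₀).2 hP₀⟩
  refine ⟨P, (hmem P).1 hPF, fun Q hQ => ?_⟩
  have h := hmax Q ((hmem Q).2 hQ)
  exact (sl_le_iff ((hmem P).1 hPF).2.1 hQ.2.1).1 h

lemma exists_leastSteep (c : MixedCoeff) (hfin : FiniteSupp c)
    (hN : ∃ P, IsFaceWeight c P) : ∃ P, IsLeastSteep c P := by
  classical
  set F : Finset (ℕ × ℕ) := (fw_finite c hfin).toFinset with hF
  have hmem : ∀ R, R ∈ F ↔ IsFaceWeight c R := fun R => Set.Finite.mem_toFinset _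
  obtain ⟨P₀, hP₀⟩ := hN
  obtain ⟨P, hPF, hmin⟩ := Finset.exists_min_image F sl ⟨P₀, (hmem P₀).2 hP₀⟩
  refine ⟨P, (hmem P).1 hPF, fun Q hQ => ?_⟩
  have h := hmin Q ((hmem Q).2 hQ)
  exact (sl_le_iff hQ.2.1 ((hmem P).1 hPF).2.1).1 h

lemma exists_const_color {α : Type*} [Finite α] (γ : ℕ → α) :
    ∃ x, ∃ᶠ k in atTop, γ k = x := by
  by_contra h
  push_neg at h
  have h2 : ∀ x : α, ∀ᶠ k in atTop, γ k ≠ x := fun x => h x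
  have h3 : ∀ᶠ k in atTop, ∀ x : α, γ k ≠ x := eventually_all.2 h2
  obtain ⟨k, hk⟩ := h3.exists
  exact hk (γ k) rfl

lemma pow_mul_pow_tendsto_zero {X Y : ℕ → ℝ} (hX : Tendsto X atTop (𝓝 0))
    (hY : Tendsto Y atTop (𝓝 0)) (m n : ℕ) (hmn : m + n ≠ 0) :
    Tendsto (fun k => X k ^ m * Y k ^ n) atTop (𝓝 0) := by
  have h := (hX.pow m).mul (hY.pow n)
  have h0 : (0 : ℝ) ^ m * (0 : ℝ) ^ n = 0 := by
    rcases Nat.eq_zero_or_pos m with hm | hm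
    · have hn : n ≠ 0 := by omega
      rw [zero_pow hn, mul_zero]
    · rw [zero_pow hm.ne', zero_mul]
  rwa [h0] at h

lemma rpow_inv_tendsto_zero {X : ℕ → ℝ} (hX : Tendsto X atTop (𝓝 0)) (D : ℕ)
    (hD : 0 < D) :
    Tendsto (fun k => X k ^ ((D : ℝ)⁻¹)) atTop (𝓝 0) := by
  have hcont := Real.continuousAt_rpow_const 0 ((D : ℝ)⁻¹) (Or.inr (by positivity))
  have h0 : (0 : ℝ) ^ ((D : ℝ)⁻¹) = 0 := Real.zero_rpow (by positivity)
  have := hcont.tendsto.comp hX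
  rwa [h0] at this

end WeakIso
namespace WeakIso

open Filter Topology

/-- the comparison ratio for a weight `R` -/
noncomputable def βq (u v : ℕ → ℂ) (R : ℕ × ℕ) (k : ℕ) : ℝ :=
  ‖u k‖ ^ R.2 / ‖v k‖ ^ R.1

noncomputable def γq (u v : ℕ → ℂ) (R : ℕ × ℕ) (k : ℕ) : ℝ :=
  ‖v k‖ ^ R.1 / ‖u k‖ ^ R.2

lemma βq_nonneg (u v : ℕ → ℂ) (R : ℕ × ℕ) (k : ℕ) : 0 ≤ βq u v R k := by
  unfold βq
  positivity

lemma βq_mul_γq (u v : ℕ → ℂ) (R : ℕ × ℕ) (k : ℕ) (hu : u k ≠ 0) (hv : v k ≠ 0) :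
    βq u v R k * γq u v R k = 1 := by
  unfold βq γq
  have hU : ‖u k‖ ≠ 0 := norm_ne_zero_iff.2 hu
  have hV : ‖v k‖ ≠ 0 := norm_ne_zero_iff.2 hv
  rw [div_mul_div_comm, mul_comm (‖v k‖ ^ R.1) (‖u k‖ ^ R.2), div_self
    (mul_ne_zero (pow_ne_zero _ hU) (pow_ne_zero _ hV))]

lemma beta_relation (u v : ℕ → ℂ) (A B : ℕ × ℕ) (k : ℕ)
    (hu : u k ≠ 0) (hv : v k ≠ 0) (hcross : A.1 * B.2 ≤ B.1 * A.2) :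
    βq u v B k ^ A.2 * ‖v k‖ ^ (B.1 * A.2 - A.1 * B.2) = βq u v A k ^ B.2 := by
  unfold βq
  have hU : ‖u k‖ ≠ 0 := norm_ne_zero_iff.2 hu
  have hV : ‖v k‖ ≠ 0 := norm_ne_zero_iff.2 hv
  have key : ‖v k‖ ^ (B.1 * A.2) = ‖v k‖ ^ (A.1 * B.2) * ‖v k‖ ^ (B.1 * A.2 - A.1 * B.2) := by
    rw [← pow_add]
    congr 1
    omega
  rw [div_pow, div_pow, ← pow_mul, ← pow_mul, ← pow_mul, ← pow_mul]
  rw [div_mul_eq_mul_div, div_eq_div_iff (pow_ne_zero _ hV) (pow_ne_zero _ hV)]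
  rw [mul_assoc, ← pow_add, Nat.sub_add_cancel hcross, mul_comm B.2 A.2]

/-- The main sequence-contradiction lemma. -/
lemma no_bad (c : MixedCoeff) (hfin : FiniteSupp c)
    (hN : ∃ P, IsFaceWeight c P) (hinner : InnerNonDeg c)
    (u v : ℕ → ℂ)
    (hz : ∀ k, eval c (u k) (v k) = 0) (hcr : ∀ k, Crit c (u k) (v k))
    (hulim : Tendsto u atTop (𝓝 0)) (hvlim : Tendsto v atTop (𝓝 0))
    (hne0 : ∀ k, ¬(u k = 0 ∧ v k = 0)) : False := by
  classical
  obtain ⟨P1, hP1s⟩ := exists_steepest c hfin hN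
  obtain ⟨PN, hPNs⟩ := exists_leastSteep c hfin hN
  have hP1fw : IsFaceWeight c P1 := hP1s.1
  have hPNfw : IsFaceWeight c PN := hPNs.1
  -- Case A : v vanishes frequently
  by_cases hA : ∃ᶠ k in atTop, v k = 0
  · obtain ⟨φ, hφ, hφv⟩ := extraction_of_frequently_atTop hA
    have hu0 : ∀ k, u (φ k) ≠ 0 := by
      intro k h0
      exact hne0 (φ k) ⟨h0, hφv k⟩
    obtain ⟨a₀, b₀, ha₀, heval, hcrit⟩ := face_contra_u c hfin PN hPNfw.1 hPNfw.2.1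
      (u ∘ φ) (v ∘ φ) hu0 (fun k => hz _) (fun k => hcr _)
      (hulim.comp hφ.tendsto_atTop) 0
      (fun k => by
        simp only [Function.comp_apply, hφv k, norm_zero]
        rw [zero_pow hPNfw.1.ne', zero_div])
    exact hinner.2.1 PN hPNs a₀ b₀
      (by intro h0; rw [h0, norm_zero] at ha₀; exact zero_ne_one ha₀) heval hcrit
  have hAev : ∀ᶠ k in atTop, v k ≠ 0 := not_frequently.1 hA
  -- Case B : β P1 frequently bounded
  by_cases hB : ∃ C : ℝ, ∃ᶠ k in atTop, (v k ≠ 0 ∧ βq u v P1 k ≤ C)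
  · obtain ⟨C, hC⟩ := hB
    obtain ⟨φ, hφ, hφp⟩ := extraction_of_frequently_atTop hC
    obtain ⟨a₀, b₀, hb₀, _, heval, hcrit⟩ := face_contra_v c hfin P1 hP1fw.1 hP1fw.2.1
      (u ∘ φ) (v ∘ φ) (fun k => (hφp k).1) (fun k => hz _) (fun k => hcr _)
      (hvlim.comp hφ.tendsto_atTop) 0 C
      (fun k => by
        simp only [Function.comp_apply]
        positivity)
      (fun k => (hφp k).2)
    exact hinner.1 P1 hP1s a₀ b₀
      (by intro h0; rw [h0, norm_zero] at hb₀; exact zero_ne_one hb₀) heval hcrit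
  have hf1 : ∀ C : ℝ, ∀ᶠ k in atTop, C ≤ βq u v P1 k := by
    intro C
    have h1 : ∀ᶠ k in atTop, ¬(v k ≠ 0 ∧ βq u v P1 k ≤ C) :=
      not_frequently.1 (fun hcon => hB ⟨C, hcon⟩)
    filter_upwards [h1, hAev] with k hk hv
    by_contra hlt
    push_neg at hlt
    exact hk ⟨hv, hlt.le⟩
  have hf4 : ∀ᶠ k in atTop, u k ≠ 0 ∧ v k ≠ 0 := by
    filter_upwards [hf1 1, hAev] with k h1 hv
    refine ⟨?_, hv⟩
    intro h0
    unfold βq at h1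
    rw [h0, norm_zero, zero_pow hP1fw.2.1.ne', zero_div] at h1
    linarith
  -- Case D : γ PN frequently bounded
  by_cases hD : ∃ C : ℝ, ∃ᶠ k in atTop, (u k ≠ 0 ∧ v k ≠ 0 ∧ γq u v PN k ≤ C)
  · obtain ⟨C, hC⟩ := hD
    obtain ⟨φ, hφ, hφp⟩ := extraction_of_frequently_atTop hC
    obtain ⟨a₀, b₀, ha₀, heval, hcrit⟩ := face_contra_u c hfin PN hPNfw.1 hPNfw.2.1
      (u ∘ φ) (v ∘ φ) (fun k => (hφp k).1) (fun k => hz _) (fun k => hcr _)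
      (hulim.comp hφ.tendsto_atTop) C (fun k => (hφp k).2.2)
    exact hinner.2.1 PN hPNs a₀ b₀
      (by intro h0; rw [h0, norm_zero] at ha₀; exact zero_ne_one ha₀) heval hcrit
  have hf2 : ∀ C : ℝ, ∀ᶠ k in atTop, C ≤ γq u v PN k := by
    intro C
    have h1 : ∀ᶠ k in atTop, ¬(u k ≠ 0 ∧ v k ≠ 0 ∧ γq u v PN k ≤ C) :=
      not_frequently.1 (fun hcon => hD ⟨C, hcon⟩)
    filter_upwards [h1, hf4] with k hk h4
    by_contra hlt
    push_neg at hlt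
    exact hk ⟨h4.1, h4.2, hlt.le⟩
  -- Case E : some β R frequently in a compact interval of (0,∞)
  by_cases hE : ∃ R, IsFaceWeight c R ∧ ∃ c₀ > (0 : ℝ), ∃ C, ∃ᶠ k in atTop,
      (u k ≠ 0 ∧ v k ≠ 0 ∧ c₀ ≤ βq u v R k ∧ βq u v R k ≤ C)
  · obtain ⟨R, hRfw, c₀, hc₀, C, hC⟩ := hE
    obtain ⟨φ, hφ, hφp⟩ := extraction_of_frequently_atTop hC
    obtain ⟨a₀, b₀, hb₀, hlow, heval, hcrit⟩ := face_contra_v c hfin R hRfw.1 hRfw.2.1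
      (u ∘ φ) (v ∘ φ) (fun k => (hφp k).2.1) (fun k => hz _) (fun k => hcr _)
      (hvlim.comp hφ.tendsto_atTop) c₀ C (fun k => (hφp k).2.2.1)
      (fun k => (hφp k).2.2.2)
    have ha₀ : a₀ ≠ 0 := by
      intro h0
      rw [h0, norm_zero, zero_pow hRfw.2.1.ne'] at hlow
      linarith
    exact hinner.2.2.1 R hRfw a₀ b₀ ha₀
      (by intro h0; rw [h0, norm_zero] at hb₀; exact zero_ne_one hb₀) heval hcrit
  have hesc : ∀ R, IsFaceWeight c R → ∀ c₀ C : ℝ, 0 < c₀ →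
      ∀ᶠ k in atTop, ¬(c₀ ≤ βq u v R k ∧ βq u v R k ≤ C) := by
    intro R hR c₀ C hc₀
    have h1 : ∀ᶠ k in atTop, ¬(u k ≠ 0 ∧ v k ≠ 0 ∧ c₀ ≤ βq u v R k ∧ βq u v R k ≤ C) :=
      not_frequently.1 (fun hcon => hE ⟨R, hR, c₀, hc₀, C, hcon⟩)
    filter_upwards [h1, hf4] with k hk h4 hic
    exact hk ⟨h4.1, h4.2, hic.1, hic.2⟩
  -- Case F : the vertex case
  obtain ⟨φ₀, hφ₀, hφ₀p⟩ := extraction_of_frequently_atTop hf4.frequently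
  set F : Finset (ℕ × ℕ) := (fw_finite c hfin).toFinset with hF
  have hmemF : ∀ R, R ∈ F ↔ IsFaceWeight c R := fun R => Set.Finite.mem_toFinset _
  have hcolor := exists_const_color (fun k => fun R : {x // x ∈ F} =>
    decide (βq u v R.1 (φ₀ k) ≤ 1))
  obtain ⟨colv, hcolv⟩ := hcolor
  obtain ⟨φ₁, hφ₁, hφ₁p⟩ := extraction_of_frequently_atTop hcolv
  set ψ : ℕ → ℕ := φ₀ ∘ φ₁ with hψdef
  have hψ : StrictMono ψ := hφ₀.comp hφ₁
  have hψc : ∀ (R : ℕ × ℕ) (hR : R ∈ F) (k : ℕ),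
      βq u v R (ψ k) ≤ 1 ↔ colv ⟨R, hR⟩ = true := by
    intro R hR k
    have h1 := congrFun (hφ₁p k) ⟨R, hR⟩
    rw [← h1, decide_eq_true_iff]
    exact Iff.rfl
  have hψuv : ∀ k, u (ψ k) ≠ 0 ∧ v (ψ k) ≠ 0 := fun k => hφ₀p (φ₁ k)
  -- limits per class
  have hlim0 : ∀ (R : ℕ × ℕ) (hR : R ∈ F), colv ⟨R, hR⟩ = true →
      Tendsto (fun k => βq u v R (ψ k)) atTop (𝓝 0) := by
    intro R hR hc
    rw [Metric.tendsto_atTop]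
    intro ε hε
    have h2 := hψ.tendsto_atTop.eventually
      (hesc R ((hmemF R).1 hR) (min ε 1) 1 (by positivity))
    obtain ⟨N, hN⟩ := eventually_atTop.1 h2
    refine ⟨N, fun k hk => ?_⟩
    have h3 := hN k hk
    have h4 : βq u v R (ψ k) ≤ 1 := (hψc R hR k).2 hc
    have h5 : βq u v R (ψ k) < min ε 1 := by
      by_contra h6
      push_neg at h6
      exact h3 ⟨h6, h4⟩
    rw [Real.dist_eq, sub_zero, _root_.abs_of_nonneg (βq_nonneg u v R _)]
    exact lt_of_lt_of_le h5 (min_le_left _ _)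
  have hlimT : ∀ (R : ℕ × ℕ) (hR : R ∈ F), colv ⟨R, hR⟩ = false →
      Tendsto (fun k => βq u v R (ψ k)) atTop atTop := by
    intro R hR hc
    rw [tendsto_atTop]
    intro C
    have h2 := hψ.tendsto_atTop.eventually
      (hesc R ((hmemF R).1 hR) 1 (max C 1) one_pos)
    filter_upwards [h2] with k h3
    have h4 : 1 < βq u v R (ψ k) := by
      by_contra h5
      push_neg at h5
      rw [← Bool.not_eq_true] at hc
      exact hc ((hψc R hR k).1 h5)
    have h6 : max C 1 < βq u v R (ψ k) := by
      by_contra h7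
      push_neg at h7
      exact h3 ⟨h4.le, h7⟩
    exact le_of_lt (lt_of_le_of_lt (le_max_left C 1) h6)
  have hP1F : P1 ∈ F := (hmemF P1).2 hP1fw
  have hPNF : PN ∈ F := (hmemF PN).2 hPNfw
  have hcolP1 : colv ⟨P1, hP1F⟩ = false := by
    by_contra h
    rw [Bool.not_eq_false] at h
    obtain ⟨k, h2⟩ := (hψ.tendsto_atTop.eventually (hf1 2)).exists
    have h3 : βq u v P1 (ψ k) ≤ 1 := (hψc P1 hP1F k).2 h
    linarith
  have hcolPN : colv ⟨PN, hPNF⟩ = true := by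
    by_contra h
    rw [Bool.not_eq_true] at h
    obtain ⟨k, h2⟩ := (hψ.tendsto_atTop.eventually (hf2 2)).exists
    have h3 : 1 < βq u v PN (ψ k) := by
      by_contra h5
      push_neg at h5
      rw [← Bool.not_eq_true] at h
      exact h ((hψc PN hPNF k).1 h5)
    have h4 := βq_mul_γq u v PN (ψ k) (hψuv k).1 (hψuv k).2
    nlinarith
  -- extremal weights in each class
  set plus : Finset {x // x ∈ F} := F.attach.filter (fun R => colv R = false) with hplus
  set minus : Finset {x // x ∈ F} := F.attach.filter (fun R => colv R = true) with hminus
  have hplusne : plus.Nonempty :=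
    ⟨⟨P1, hP1F⟩, Finset.mem_filter.2 ⟨Finset.mem_attach _ _, hcolP1⟩⟩
  have hminusne : minus.Nonempty :=
    ⟨⟨PN, hPNF⟩, Finset.mem_filter.2 ⟨Finset.mem_attach _ _, hcolPN⟩⟩
  obtain ⟨Ps, hPsmem, hPsmin⟩ := Finset.exists_min_image plus (fun R => sl R.1) hplusne
  obtain ⟨Qs, hQsmem, hQsmax⟩ := Finset.exists_max_image minus (fun R => sl R.1) hminusne
  have hPsfw : IsFaceWeight c Ps.1 := (hmemF Ps.1).1 Ps.2
  have hQsfw : IsFaceWeight c Qs.1 := (hmemF Qs.1).1 Qs.2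
  have hPscol : colv Ps = false := (Finset.mem_filter.1 hPsmem).2
  have hQscol : colv Qs = true := (Finset.mem_filter.1 hQsmem).2
  have hPstend : Tendsto (fun k => βq u v Ps.1 (ψ k)) atTop atTop := by
    have := hlimT Ps.1 Ps.2 ?_
    · exact this
    · rw [← hPscol]
  have hQstend : Tendsto (fun k => βq u v Qs.1 (ψ k)) atTop (𝓝 0) := by
    have := hlim0 Qs.1 Qs.2 ?_
    · exact this
    · rw [← hQscol]
  -- Ps is strictly steeper than Qs
  have hslope : Qs.1.1 * Ps.1.2 < Ps.1.1 * Qs.1.2 := by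
    have hnePQ : Ps.1 ≠ Qs.1 := by
      intro h
      have : Ps = Qs := Subtype.ext h
      rw [this, hQscol] at hPscol
      exact Bool.noConfusion hPscol
    rcases lt_trichotomy (sl Qs.1) (sl Ps.1) with h | h | h
    · exact (sl_lt_iff hPsfw.2.1 hQsfw.2.1).1 h
    · exfalso
      apply hnePQ
      have hcross : Ps.1.1 * Qs.1.2 = Qs.1.1 * Ps.1.2 := by
        unfold sl at h
        rw [div_eq_div_iff (by exact_mod_cast hQsfw.2.1.ne') (by exact_mod_cast hPsfw.2.1.ne')] at h
        exact_mod_cast h.symm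
      exact weight_eq hPsfw.1 hPsfw.2.2.1 hQsfw.1 hQsfw.2.2.1 hcross
    · -- sl Ps < sl Qs : contradiction via the ratio identity
      exfalso
      have hcross : Ps.1.1 * Qs.1.2 ≤ Qs.1.1 * Ps.1.2 :=
        ((sl_lt_iff hQsfw.2.1 hPsfw.2.1).1 h).le
      have hrel : ∀ k, βq u v Qs.1 (ψ k) ^ Ps.1.2
          * ‖v (ψ k)‖ ^ (Qs.1.1 * Ps.1.2 - Ps.1.1 * Qs.1.2)
          = βq u v Ps.1 (ψ k) ^ Qs.1.2 := fun k =>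
        beta_relation u v Ps.1 Qs.1 (ψ k) (hψuv k).1 (hψuv k).2 hcross
      have hδpos : 0 < Qs.1.1 * Ps.1.2 - Ps.1.1 * Qs.1.2 := by
        have := (sl_lt_iff hQsfw.2.1 hPsfw.2.1).1 h
        omega
      have hL : Tendsto (fun k => βq u v Qs.1 (ψ k) ^ Ps.1.2
          * ‖v (ψ k)‖ ^ (Qs.1.1 * Ps.1.2 - Ps.1.1 * Qs.1.2)) atTop (𝓝 0) := by
        have hvψ : Tendsto (fun k => ‖v (ψ k)‖) atTop (𝓝 0) := by
          have h1 := hvlim.norm.comp hψ.tendsto_atTop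
          rwa [norm_zero] at h1
        exact pow_mul_pow_tendsto_zero hQstend hvψ _ _ (by omega)
      have hR : Tendsto (fun k => βq u v Ps.1 (ψ k) ^ Qs.1.2) atTop atTop :=
        (tendsto_pow_atTop hQsfw.2.1.ne').comp hPstend
      have hR' : Tendsto (fun k => βq u v Qs.1 (ψ k) ^ Ps.1.2
          * ‖v (ψ k)‖ ^ (Qs.1.1 * Ps.1.2 - Ps.1.1 * Qs.1.2)) atTop atTop :=
        hR.congr fun k => (hrel k).symm
      exact not_tendsto_nhds_of_tendsto_atTop hR' 0 hL
  have hbetween : ∀ R, IsFaceWeight c R →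
      ¬(R.1 * Ps.1.2 < Ps.1.1 * R.2 ∧ Qs.1.1 * R.2 < R.1 * Qs.1.2) := by
    rintro R hR ⟨h1, h2⟩
    have hRF : R ∈ F := (hmemF R).2 hR
    by_cases hcR : colv ⟨R, hRF⟩ = false
    · have h3 := hPsmin ⟨R, hRF⟩ (Finset.mem_filter.2 ⟨Finset.mem_attach _ _, hcR⟩)
      have h4 : sl R < sl Ps.1 := (sl_lt_iff hPsfw.2.1 hR.2.1).2 h1
      exact absurd h3 (not_le.2 h4)
    · rw [Bool.not_eq_false] at hcR
      have h3 := hQsmax ⟨R, hRF⟩ (Finset.mem_filter.2 ⟨Finset.mem_attach _ _, hcR⟩)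
      have h4 : sl Qs.1 < sl R := (sl_lt_iff hR.2.1 hQsfw.2.1).2 h2
      exact absurd h3 (not_le.2 h4)
  obtain ⟨w, hwmem, hPw, hQw, huniq⟩ := common_vertex c hfin hPsfw hQsfw hslope hbetween
  -- the outer-monomial decay
  set D : ℕ := Ps.1.1 * Qs.1.2 - Qs.1.1 * Ps.1.2 with hD
  have hDpos : 0 < D := by omega
  have hX0 : Tendsto (fun k => βq u v Qs.1 (ψ k) ^ ((D : ℝ)⁻¹)) atTop (𝓝 0) :=
    rpow_inv_tendsto_zero hQstend D hDpos
  have hYseq : Tendsto (fun k => ‖v (ψ k)‖ ^ Ps.1.1 / ‖u (ψ k)‖ ^ Ps.1.2)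
      atTop (𝓝 0) := by
    have h1 := hPstend.inv_tendsto_atTop
    refine h1.congr fun k => ?_
    simp only [Pi.inv_apply]
    unfold βq
    rw [inv_div]
  have hY0 : Tendsto (fun k => (‖v (ψ k)‖ ^ Ps.1.1 / ‖u (ψ k)‖ ^ Ps.1.2) ^ ((D : ℝ)⁻¹))
      atTop (𝓝 0) := rpow_inv_tendsto_zero hYseq D hDpos
  have Hout : ∀ e : ℕ × ℕ, (∃ p, c p ≠ 0 ∧ expo p = e) → e ≠ w →
      Tendsto (fun k => ‖u (ψ k)‖ ^ e.1 * ‖v (ψ k)‖ ^ e.2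
        / (‖u (ψ k)‖ ^ w.1 * ‖v (ψ k)‖ ^ w.2)) atTop (𝓝 0) := by
    intro e he hnew
    obtain ⟨p, hp, rfl⟩ := he
    have hmP : dmin Ps.1 c ≤ ellP Ps.1 (expo p) := dmin_le hp
    have hmQ : dmin Qs.1 c ≤ ellP Qs.1 (expo p) := dmin_le hp
    set m : ℕ := ellP Ps.1 (expo p) - dmin Ps.1 c with hm'
    set n : ℕ := ellP Qs.1 (expo p) - dmin Qs.1 c with hn'
    have hm : ellP Ps.1 (expo p) = ellP Ps.1 w + m := by rw [hPw]; omega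
    have hn : ellP Qs.1 (expo p) = ellP Qs.1 w + n := by rw [hQw]; omega
    have hmn : m + n ≠ 0 := by
      intro h0
      refine huniq (expo p) ⟨p, hp, rfl⟩ hnew ⟨?_, ?_⟩
      · omega
      · omega
    have hrw : ∀ k, ‖u (ψ k)‖ ^ (expo p).1 * ‖v (ψ k)‖ ^ (expo p).2
        / (‖u (ψ k)‖ ^ w.1 * ‖v (ψ k)‖ ^ w.2)
        = (βq u v Qs.1 (ψ k) ^ ((D : ℝ)⁻¹)) ^ m
          * ((‖v (ψ k)‖ ^ Ps.1.1 / ‖u (ψ k)‖ ^ Ps.1.2) ^ ((D : ℝ)⁻¹)) ^ n := by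
      intro k
      have := ratio_decomp ‖u (ψ k)‖ ‖v (ψ k)‖
        (norm_pos_iff.2 (hψuv k).1) (norm_pos_iff.2 (hψuv k).2)
        Ps.1 Qs.1 hslope (expo p) w m n hm hn
      exact this
    exact (pow_mul_pow_tendsto_zero hX0 hY0 m n hmn).congr fun k => (hrw k).symm
  obtain ⟨a₀, b₀, ha₀, hb₀, heval, hcrit⟩ := vertex_contra c hfin w (u ∘ ψ) (v ∘ ψ)
    (fun k => (hψuv k).1) (fun k => (hψuv k).2) (fun k => hz _) (fun k => hcr _)
    (fun e he hne => Hout e he hne)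
  have hNEV : NonExtremeVertex c w :=
    ⟨hwmem, Ps.1, Qs.1, hPsfw, hQsfw, ne_of_gt hslope, hPw, hQw⟩
  exact hinner.2.2.2 w hNEV a₀ b₀
    (by intro h0; rw [h0, norm_zero] at ha₀; exact zero_ne_one ha₀)
    (by intro h0; rw [h0, norm_zero] at hb₀; exact zero_ne_one hb₀) heval hcrit

end WeakIso
end

noncomputable section
open Filter Topology WeakIso

/-- a mixed polynomial with an inner Newton non-degenerate boundary
(with at least one compact 1-face) has a weakly isolated singularity at the origin:
in a small ball around `0 ∈ ℂ²` the only point of `V_f ∩ Σ_f` is the origin. -/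
theorem inner_nondeg_weakly_isolated
    (c : MixedCoeff) (hfin : FiniteSupp c)
    (hN : ∃ P, IsFaceWeight c P)
    (hinner : InnerNonDeg c) :
    ∃ ε > (0 : ℝ), ∀ z : ℂ × ℂ, ‖z‖ < ε →
      eval c z.1 z.2 = 0 → Crit c z.1 z.2 → z = 0 := by
  by_contra hcon
  push_neg at hcon
  have hseq : ∀ k : ℕ, ∃ z : ℂ × ℂ, ‖z‖ < 1 / ((k : ℝ) + 1) ∧ eval c z.1 z.2 = 0 ∧
      Crit c z.1 z.2 ∧ z ≠ 0 := fun k => hcon (1 / ((k : ℝ) + 1)) (by positivity)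
  choose zf h1 h2 h3 h4 using hseq
  have hzlim : Tendsto zf atTop (𝓝 0) := by
    rw [tendsto_zero_iff_norm_tendsto_zero]
    refine squeeze_zero (fun k => norm_nonneg _) (fun k => (h1 k).le) ?_
    exact tendsto_one_div_add_atTop_nhds_zero_nat
  have hulim : Tendsto (fun k => (zf k).1) atTop (𝓝 0) := by
    have := (continuous_fst.tendsto ((0 : ℂ × ℂ))).comp hzlim
    exact this
  have hvlim : Tendsto (fun k => (zf k).2) atTop (𝓝 0) := by
    have := (continuous_snd.tendsto ((0 : ℂ × ℂ))).comp hzlim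
    exact this
  have hne0 : ∀ k, ¬((zf k).1 = 0 ∧ (zf k).2 = 0) := by
    intro k hk
    exact h4 k (Prod.ext hk.1 hk.2)
  exact no_bad c hfin hN hinner (fun k => (zf k).1) (fun k => (zf k).2)
    h2 h3 hulim hvlim hne0
end
end
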